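/- arXiv:2012.11234 — 4 statements merged into one kernel-verified Lean document; each statement's English description precedes it below -/
import Mathlib

section
/- Let f : ℝⁿ → ℂ be a continuous function with compact support, let h(x) = (4π)^{-n/2} exp(-‖x‖²/4), and let Wf(x,t) = ∫_{ℝⁿ} W(x−y,t) f(y) dy where W(x,t) = (4πt)^{-n/2} exp(-‖x‖²/(4t)). Then Wf(·,t)/h converges to f/h uniformly on ℝⁿ as t → 0+. -/
open MeasureTheory Metric Filter Real Topology Set ENNReal

noncomputable section

def heatKernel (n : ℕ) (x : EuclideanSpace ℝ (Fin n)) (t : ℝ) : ℝ :=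
  (4 * π * t) ^ (-(n : ℝ) / 2) * Real.exp (-‖x‖ ^ 2 / (4 * t))

def WInt (n : ℕ) (μ : Measure (EuclideanSpace ℝ (Fin n)))
    (x : EuclideanSpace ℝ (Fin n)) (t : ℝ) : ℝ≥0∞ :=
  ∫⁻ y, ENNReal.ofReal (heatKernel n (x - y) t) ∂μ

def spaceLaplacian (n : ℕ) (u : EuclideanSpace ℝ (Fin n) × ℝ → ℝ)
    (p : EuclideanSpace ℝ (Fin n) × ℝ) : ℝ :=
  ∑ i : Fin n,
    fderiv ℝ (fun y => fderiv ℝ (fun z => u (z, p.2)) y (EuclideanSpace.single i 1)) p.1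
      (EuclideanSpace.single i 1)

def upperHalfSpace (n : ℕ) : Set (EuclideanSpace ℝ (Fin n) × ℝ) := {p | 0 < p.2}

def IsHeatSolutionOn (n : ℕ) (u : EuclideanSpace ℝ (Fin n) × ℝ → ℝ)
    (S : Set (EuclideanSpace ℝ (Fin n) × ℝ)) : Prop :=
  ContDiffOn ℝ (⊤ : ℕ∞) u S ∧ ∀ p ∈ S, spaceLaplacian n u p = deriv (fun s => u (p.1, s)) p.2

def parabolicRegion (n : ℕ) (x₀ : EuclideanSpace ℝ (Fin n)) (α : ℝ) :
    Set (EuclideanSpace ℝ (Fin n) × ℝ) :=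
  {p | 0 < p.2 ∧ ‖p.1 - x₀‖ ^ 2 < α * p.2}

def HasStrongDeriv (n : ℕ) (μ : Measure (EuclideanSpace ℝ (Fin n))) (L : ℝ)
    (x₀ : EuclideanSpace ℝ (Fin n)) : Prop :=
  ∀ (c : EuclideanSpace ℝ (Fin n)) (s : ℝ), 0 < s →
    Tendsto (fun r : ℝ =>
        (μ ((fun y => x₀ + r • y) '' ball c s)).toReal /
          (volume ((fun y => r • y) '' ball c s)).toReal)
      (𝓝[>] 0) (𝓝 L)

def IsBoundaryMeasureOf (n : ℕ) (μ : Measure (EuclideanSpace ℝ (Fin n)))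
    (u : EuclideanSpace ℝ (Fin n) × ℝ → ℝ) : Prop :=
  ∀ (x : EuclideanSpace ℝ (Fin n)) (t : ℝ), 0 < t →
    ENNReal.ofReal (u (x, t)) = WInt n μ x t

namespace GWAux

variable {n : ℕ}

lemma hk_pos (x : EuclideanSpace ℝ (Fin n)) {t : ℝ} (ht : 0 < t) : 0 < heatKernel n x t :=
  mul_pos (Real.rpow_pos_of_pos (by positivity) _) (Real.exp_pos _)

lemma hk_eq (x : EuclideanSpace ℝ (Fin n)) (t : ℝ) :
    heatKernel n x t = (4 * π * t) ^ (-(n : ℝ) / 2) * rexp (-(1 / (4 * t)) * ‖x‖ ^ 2) := by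
  unfold heatKernel
  congr 2
  ring

lemma integral_gauss {b : ℝ} (hb : 0 < b) :
    ∫ v : EuclideanSpace ℝ (Fin n), rexp (-b * ‖v‖ ^ 2) = (π / b) ^ ((n : ℝ) / 2) := by
  rw [GaussianFourier.integral_rexp_neg_mul_sq_norm hb]
  norm_num [finrank_euclideanSpace_fin]

lemma integrable_gauss {b : ℝ} (hb : 0 < b) :
    Integrable (fun v : EuclideanSpace ℝ (Fin n) => rexp (-b * ‖v‖ ^ 2)) := by
  have h := (GaussianFourier.integrable_cexp_neg_mul_sq_norm_add (V := EuclideanSpace ℝ (Fin n))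
    (b := (b : ℂ)) (by simpa using hb) 0 0).norm
  refine h.congr (Filter.Eventually.of_forall fun v => ?_)
  simp only []
  rw [Complex.norm_exp]
  congr 1
  simp [Complex.add_re, Complex.mul_re]
  norm_cast
  exact Or.inl rfl

lemma integral_hk {t : ℝ} (ht : 0 < t) :
    ∫ y : EuclideanSpace ℝ (Fin n), heatKernel n y t = 1 := by
  have h4t : (0:ℝ) < 4 * π * t := by positivity
  simp_rw [hk_eq]
  rw [integral_const_mul, integral_gauss (by positivity : (0:ℝ) < 1 / (4*t))]
  have h1 : π / (1 / (4 * t)) = 4 * π * t := by field_simp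
  rw [h1, ← Real.rpow_add h4t, show -(n:ℝ)/2 + (n:ℝ)/2 = 0 by ring, Real.rpow_zero]

lemma integral_hk8 {t : ℝ} (ht : 0 < t) :
    ∫ y : EuclideanSpace ℝ (Fin n), (4 * π * t) ^ (-(n : ℝ) / 2) * rexp (-(1 / (8 * t)) * ‖y‖ ^ 2)
      = 2 ^ ((n : ℝ) / 2) := by
  have h4t : (0:ℝ) < 4 * π * t := by positivity
  rw [integral_const_mul, integral_gauss (by positivity : (0:ℝ) < 1 / (8*t))]
  have h1 : π / (1 / (8 * t)) = (4 * π * t) * 2 := by field_simp; ring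
  rw [h1, Real.mul_rpow (le_of_lt h4t) (by norm_num), ← mul_assoc, ← Real.rpow_add h4t,
    show -(n:ℝ)/2 + (n:ℝ)/2 = 0 by ring, Real.rpow_zero, one_mul]

end GWAux

open GWAux

set_option maxHeartbeats 1000000 in
/-- For `f` continuous with compact support, `Wf(·,t)/h` converges uniformly on `ℝⁿ`
to `f/h` as `t → 0+`, where `h(x) = W(x,1)`. -/
theorem gauss_weierstrass_uniform_convergence_weighted
    (n : ℕ) (f : EuclideanSpace ℝ (Fin n) → ℂ)
    (hf : Continuous f) (hsupp : HasCompactSupport f) :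
    TendstoUniformly
      (fun (t : ℝ) (x : EuclideanSpace ℝ (Fin n)) =>
        (∫ y, (heatKernel n (x - y) t : ℂ) * f y) / (heatKernel n x 1 : ℂ))
      (fun x => f x / (heatKernel n x 1 : ℂ))
      (𝓝[>] (0 : ℝ)) := by
  classical
  obtain ⟨M, hM⟩ := hsupp.exists_bound_of_continuous hf
  have hM0 : 0 ≤ M := le_trans (norm_nonneg _) (hM 0)
  obtain ⟨R₀, hR₀⟩ := hsupp.isBounded.subset_closedBall 0
  set R : ℝ := max R₀ 1 with hRdef
  have hR1 : (1:ℝ) ≤ R := le_max_right _ _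
  have hRpos : (0:ℝ) < R := lt_of_lt_of_le one_pos hR1
  have hsuppR : tsupport f ⊆ closedBall 0 R :=
    hR₀.trans (closedBall_subset_closedBall (le_max_left _ _))
  have hfx0 : ∀ x : EuclideanSpace ℝ (Fin n), R < ‖x‖ → f x = 0 := by
    intro x hx
    apply image_eq_zero_of_notMem_tsupport
    intro hmem
    exact absurd (mem_closedBall_zero_iff.mp (hsuppR hmem)) (not_le.mpr hx)
  have hfint : Integrable f := hf.integrable_of_hasCompactSupport hsupp
  set I₁ : ℝ := ∫ y, ‖f y‖ with hI₁def
  have hI₁0 : 0 ≤ I₁ := integral_nonneg fun y => norm_nonneg _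
  set C : ℝ := (4*π) ^ ((n:ℝ)/2) * rexp (R^2) with hCdef
  have hCpos : 0 < C := mul_pos (Real.rpow_pos_of_pos (by positivity) _) (Real.exp_pos _)
  -- the weight bound : 1 / heatKernel n x 1 ≤ C when ‖x‖ ≤ 2R
  have hweight : ∀ x : EuclideanSpace ℝ (Fin n), (0:ℝ) < heatKernel n x 1 := fun x => hk_pos x one_pos
  rw [Metric.tendstoUniformly_iff]
  intro ε hε
  set ε₁ : ℝ := ε / (2*C) with hε₁def
  have hε₁ : 0 < ε₁ := div_pos hε (by positivity)
  have huc : UniformContinuous f :=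
    hf.uniformContinuous_of_tendsto_cocompact hsupp.is_zero_at_infty
  obtain ⟨δ', hδ'pos, hδ'⟩ := Metric.uniformContinuous_iff.mp huc ε₁ hε₁
  set δ : ℝ := min δ' 1 with hδdef
  have hδpos : 0 < δ := lt_min hδ'pos one_pos
  have hδ1 : δ ≤ 1 := min_le_right _ _
  have hδf : ∀ x y : EuclideanSpace ℝ (Fin n), dist y x < δ → ‖f y - f x‖ ≤ ε₁ := by
    intro x y hd
    have := hδ' (lt_of_lt_of_le hd (min_le_left _ _))
    rw [dist_eq_norm] at this
    exact le_of_lt this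
  -- the key quantitative bound
  have key : ∀ t : ℝ, 0 < t → t ≤ 1/4 → ∀ x : EuclideanSpace ℝ (Fin n),
      dist (f x / (heatKernel n x 1 : ℂ))
        ((∫ y, (heatKernel n (x - y) t : ℂ) * f y) / (heatKernel n x 1 : ℂ))
      ≤ C*ε₁ + (C*(2*M)*2^((n:ℝ)/2)) * rexp (-δ^2/(8*t))
          + (I₁ * rexp (R^2)) * (t^(-(n:ℝ)/2) * rexp (-(R^2)/(4*t))) := by
    intro t ht ht4 x
    have h4t : (0:ℝ) < 4 * π * t := by positivity
    set K : EuclideanSpace ℝ (Fin n) → ℝ := fun y => heatKernel n (x - y) t with hKdef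
    have hKpos : ∀ y, 0 < K y := fun y => hk_pos _ ht
    have hKeq : ∀ y, K y = (4*π*t) ^ (-(n:ℝ)/2) * rexp (-‖x - y‖^2/(4*t)) := fun y => rfl
    have hKcont : Continuous K := by
      apply Continuous.mul continuous_const
      apply Real.continuous_exp.comp
      fun_prop
    have hKint : Integrable K := by
      have h1 := ((integrable_gauss (n := n) (by positivity : (0:ℝ) < 1/(4*t))).const_mul
        ((4*π*t) ^ (-(n:ℝ)/2))).comp_sub_left x
      exact h1.congr (Filter.Eventually.of_forall fun y => (hk_eq (x - y) t).symm)
    have hmass : ∫ y, K y = 1 := by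
      rw [hKdef]
      rw [MeasureTheory.integral_sub_left_eq_self (fun z => heatKernel n z t) volume x]
      exact integral_hk ht
    have hWfint : Integrable (fun y => (K y : ℂ) * f y) := by
      apply Continuous.integrable_of_hasCompactSupport
      · exact (Complex.continuous_ofReal.comp hKcont).mul hf
      · exact HasCompactSupport.intro hsupp fun y hy => by
          rw [image_eq_zero_of_notMem_tsupport hy, mul_zero]
    have hconst : Integrable (fun y => (K y : ℂ) * f x) := hKint.ofReal.mul_const (f x)
    have h2 : (∫ y, ((K y : ℝ) : ℂ)) = 1 := by
      rw [show (∫ y, ((K y : ℝ) : ℂ)) = ((∫ y, K y : ℝ) : ℂ) from integral_ofReal, hmass]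
      norm_num
    have hkey1 : (∫ y, (K y : ℂ) * f y) - f x = ∫ y, (K y : ℂ) * (f y - f x) := by
      have h3 : ∫ y, (K y : ℂ) * (f y - f x)
          = (∫ y, (K y : ℂ) * f y) - ∫ y, (K y : ℂ) * f x := by
        rw [← integral_sub hWfint hconst]
        congr 1; funext y; ring
      rw [h3, integral_mul_const, h2, one_mul]
    have hnorm : ‖(∫ y, (K y : ℂ) * f y) - f x‖ ≤ ∫ y, ‖f y - f x‖ * K y := by
      rw [hkey1]
      refine (norm_integral_le_integral_norm _).trans_eq ?_
      congr 1; funext y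
      rw [norm_mul, Complex.norm_real, Real.norm_eq_abs, abs_of_pos (hKpos y)]
      ring
    have hD : Integrable (fun y => ‖f y - f x‖ * K y) := by
      apply hKint.bdd_mul (c := 2*M)
      · exact ((hf.sub continuous_const).norm).aestronglyMeasurable
      · refine Filter.Eventually.of_forall fun y => ?_
        rw [Real.norm_eq_abs, abs_of_nonneg (norm_nonneg _)]
        calc ‖f y - f x‖ ≤ ‖f y‖ + ‖f x‖ := norm_sub_le _ _
        _ ≤ M + M := add_le_add (hM y) (hM x)
        _ = 2*M := by ring
    rw [dist_eq_norm, div_sub_div_same, norm_div, Complex.norm_real, Real.norm_eq_abs,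
      abs_of_pos (hweight x), norm_sub_rev]
    by_cases hx : ‖x‖ ≤ 2*R
    · -- near the support
      set bfun : EuclideanSpace ℝ (Fin n) → ℝ := fun y =>
        (2*M) * (rexp (-δ^2/(8*t)) * ((4*π*t) ^ (-(n:ℝ)/2) * rexp (-(1/(8*t)) * ‖x - y‖^2)))
        with hbdef
      have hbint : Integrable bfun := by
        have h1 := ((((integrable_gauss (n := n) (by positivity : (0:ℝ) < 1/(8*t))).const_mul
          ((4*π*t) ^ (-(n:ℝ)/2))).comp_sub_left x).const_mul
            (rexp (-δ^2/(8*t)))).const_mul (2*M)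
        exact h1
      have hbound : ∀ y ∉ ball x δ, ‖f y - f x‖ * K y ≤ bfun y := by
        intro y hy
        have hxy : δ ≤ ‖x - y‖ := by
          have h1 : δ ≤ dist y x := not_lt.mp fun h => hy (mem_ball.mpr h)
          rwa [dist_eq_norm, ← norm_neg, neg_sub] at h1
        have hsq : δ^2 ≤ ‖x - y‖^2 := pow_le_pow_left₀ hδpos.le hxy 2
        have hexp : -‖x - y‖^2/(4*t) ≤ -δ^2/(8*t) + -(1/(8*t)) * ‖x - y‖^2 := by
          have heq : (-δ^2/(8*t) + -(1/(8*t)) * ‖x - y‖^2) - (-‖x - y‖^2/(4*t))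
              = (‖x - y‖^2 - δ^2)/(8*t) := by field_simp; ring
          have h0 : 0 ≤ (‖x - y‖^2 - δ^2)/(8*t) := div_nonneg (by linarith) (by linarith)
          linarith
        have hKle : K y ≤ rexp (-δ^2/(8*t)) * ((4*π*t) ^ (-(n:ℝ)/2)
            * rexp (-(1/(8*t)) * ‖x - y‖^2)) := by
          rw [hKeq y]
          calc (4*π*t) ^ (-(n:ℝ)/2) * rexp (-‖x - y‖^2/(4*t))
              ≤ (4*π*t) ^ (-(n:ℝ)/2) * (rexp (-δ^2/(8*t)) * rexp (-(1/(8*t)) * ‖x - y‖^2)) := by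
                apply mul_le_mul_of_nonneg_left ?_ (by positivity)
                rw [← Real.exp_add]
                exact Real.exp_le_exp.mpr hexp
          _ = rexp (-δ^2/(8*t)) * ((4*π*t) ^ (-(n:ℝ)/2) * rexp (-(1/(8*t)) * ‖x - y‖^2)) := by
                ring
        have h2M : ‖f y - f x‖ ≤ 2*M := by
          calc ‖f y - f x‖ ≤ ‖f y‖ + ‖f x‖ := norm_sub_le _ _
          _ ≤ M + M := add_le_add (hM y) (hM x)
          _ = 2*M := by ring
        calc ‖f y - f x‖ * K y ≤ (2*M) * K y :=
              mul_le_mul_of_nonneg_right h2M (hKpos y).le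
        _ ≤ bfun y := mul_le_mul_of_nonneg_left hKle (by positivity)
      have hfar : ∫ y in (ball x δ)ᶜ, ‖f y - f x‖ * K y
          ≤ (2*M) * (rexp (-δ^2/(8*t)) * 2^((n:ℝ)/2)) := by
        calc ∫ y in (ball x δ)ᶜ, ‖f y - f x‖ * K y ≤ ∫ y in (ball x δ)ᶜ, bfun y :=
              setIntegral_mono_on hD.integrableOn hbint.integrableOn
                measurableSet_ball.compl hbound
        _ ≤ ∫ y, bfun y := setIntegral_le_integral hbint
              (Filter.Eventually.of_forall fun y => by positivity)
        _ = (2*M) * (rexp (-δ^2/(8*t)) * 2^((n:ℝ)/2)) := by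
              rw [hbdef]
              rw [integral_const_mul, integral_const_mul]
              congr 2
              rw [MeasureTheory.integral_sub_left_eq_self
                (fun z => (4*π*t) ^ (-(n:ℝ)/2) * rexp (-(1/(8*t)) * ‖z‖^2)) volume x]
              exact integral_hk8 ht
      have hnear : ∫ y in ball x δ, ‖f y - f x‖ * K y ≤ ε₁ := by
        calc ∫ y in ball x δ, ‖f y - f x‖ * K y ≤ ∫ y in ball x δ, ε₁ * K y :=
              setIntegral_mono_on hD.integrableOn (hKint.const_mul ε₁).integrableOn
                measurableSet_ball fun y hy =>
                  mul_le_mul_of_nonneg_right (hδf x y (mem_ball.mp hy)) (hKpos y).le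
        _ ≤ ∫ y, ε₁ * K y := setIntegral_le_integral (hKint.const_mul ε₁)
              (Filter.Eventually.of_forall fun y => mul_nonneg hε₁.le (hKpos y).le)
        _ = ε₁ := by rw [integral_const_mul, hmass, mul_one]
      have htotal : ∫ y, ‖f y - f x‖ * K y ≤ ε₁ + (2*M) * (rexp (-δ^2/(8*t)) * 2^((n:ℝ)/2)) := by
        rw [← integral_add_compl measurableSet_ball hD]
        exact add_le_add hnear hfar
      have hub : ‖(∫ y, (K y : ℂ) * f y) - f x‖
          ≤ ε₁ + (2*M) * (rexp (-δ^2/(8*t)) * 2^((n:ℝ)/2)) := hnorm.trans htotal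
      have hh1 : (4*π) ^ (-(n:ℝ)/2) * rexp (-(R^2)) ≤ heatKernel n x 1 := by
        have h1 : heatKernel n x 1 = (4*π) ^ (-(n:ℝ)/2) * rexp (-‖x‖^2/4) := by
          simp [heatKernel]
        rw [h1]
        apply mul_le_mul_of_nonneg_left ?_ (by positivity)
        apply Real.exp_le_exp.mpr
        have : ‖x‖^2 ≤ (2*R)^2 := pow_le_pow_left₀ (norm_nonneg x) hx 2
        nlinarith
      have hcinv : ((4*π) ^ (-(n:ℝ)/2) * rexp (-(R^2)))⁻¹ = C := by
        rw [mul_inv, ← Real.exp_neg, neg_neg, neg_div,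
          Real.rpow_neg (by positivity : (0:ℝ) ≤ 4*π), inv_inv, hCdef]
      calc ‖(∫ y, (K y : ℂ) * f y) - f x‖ / heatKernel n x 1
          ≤ (ε₁ + (2*M) * (rexp (-δ^2/(8*t)) * 2^((n:ℝ)/2)))
            / ((4*π) ^ (-(n:ℝ)/2) * rexp (-(R^2))) := by
            apply div_le_div₀ (add_nonneg hε₁.le (by positivity)) hub (by positivity) hh1
      _ = C*ε₁ + (C*(2*M)*2^((n:ℝ)/2)) * rexp (-δ^2/(8*t)) := by
            rw [div_eq_mul_inv, hcinv]; ring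
      _ ≤ C*ε₁ + (C*(2*M)*2^((n:ℝ)/2)) * rexp (-δ^2/(8*t))
            + (I₁ * rexp (R^2)) * (t^(-(n:ℝ)/2) * rexp (-(R^2)/(4*t))) := by
            have : (0:ℝ) ≤ (I₁ * rexp (R^2)) * (t^(-(n:ℝ)/2) * rexp (-(R^2)/(4*t))) := by
              positivity
            linarith
    · -- far from the support
      push_neg at hx
      have hfx : f x = 0 := hfx0 x (by linarith)
      rw [hfx, sub_zero]
      set c₂ : ℝ := (4*π*t) ^ (-(n:ℝ)/2) * rexp (-‖x‖^2/(16*t)) with hc₂def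
      have hWb : ‖∫ y, (K y : ℂ) * f y‖ ≤ c₂ * I₁ := by
        refine (norm_integral_le_integral_norm _).trans ?_
        have hpt : ∀ y, ‖(K y : ℂ) * f y‖ ≤ c₂ * ‖f y‖ := by
          intro y
          rw [norm_mul, Complex.norm_real, Real.norm_eq_abs, abs_of_pos (hKpos y)]
          by_cases hy : f y = 0
          · simp [hy]
          · have hyR : ‖y‖ ≤ R := by
              have : y ∈ tsupport f := subset_closure (by exact hy)
              exact mem_closedBall_zero_iff.mp (hsuppR this)
            have hxy : ‖x‖/2 ≤ ‖x - y‖ := by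
              have h1 : ‖x‖ - ‖y‖ ≤ ‖x - y‖ := norm_sub_norm_le x y
              linarith
            have hsq : ‖x‖^2/4 ≤ ‖x - y‖^2 := by nlinarith [norm_nonneg x, norm_nonneg (x - y)]
            have hKle : K y ≤ c₂ := by
              rw [hKeq y, hc₂def]
              apply mul_le_mul_of_nonneg_left ?_ (by positivity)
              apply Real.exp_le_exp.mpr
              have heq : (-‖x‖^2/(16*t)) - (-‖x - y‖^2/(4*t))
                  = (4*‖x - y‖^2 - ‖x‖^2)/(16*t) := by field_simp; ring
              have h0 : 0 ≤ (4*‖x - y‖^2 - ‖x‖^2)/(16*t) := div_nonneg (by linarith) (by linarith)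
              linarith
            exact mul_le_mul_of_nonneg_right hKle (norm_nonneg _)
        calc ∫ y, ‖(K y : ℂ) * f y‖ ≤ ∫ y, c₂ * ‖f y‖ :=
              integral_mono hWfint.norm (hfint.norm.const_mul c₂) hpt
        _ = c₂ * I₁ := by rw [integral_const_mul]
      have h1eq : heatKernel n x 1 = (4*π) ^ (-(n:ℝ)/2) * rexp (-‖x‖^2/4) := by
        simp [heatKernel]
      have hch : c₂ / heatKernel n x 1 = t^(-(n:ℝ)/2) * rexp (‖x‖^2/4 - ‖x‖^2/(16*t)) := by
        rw [h1eq, hc₂def, mul_div_mul_comm]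
        congr 1
        · rw [show (4:ℝ)*π*t = (4*π)*t by ring,
            Real.mul_rpow (by positivity : (0:ℝ) ≤ 4*π) ht.le]
          rw [mul_comm, mul_div_assoc, div_self (by positivity), mul_one]
        · rw [← Real.exp_sub]
          congr 1
          ring
      have hx4 : 4*R^2 ≤ ‖x‖^2 := by nlinarith
      have hexp2 : ‖x‖^2/4 - ‖x‖^2/(16*t) ≤ R^2 - R^2/(4*t) := by
        have h16 : (0:ℝ) < 16*t := by linarith
        have e1 : ‖x‖^2/4 - ‖x‖^2/(16*t) = (‖x‖^2*(4*t-1))/(16*t) := by field_simp; ring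
        have e2 : R^2 - R^2/(4*t) = (4*R^2*(4*t-1))/(16*t) := by field_simp; ring
        rw [e1, e2]
        exact (div_le_div_iff_of_pos_right h16).mpr
          (mul_le_mul_of_nonpos_right hx4 (by linarith : 4*t-1 ≤ 0))
      calc ‖∫ y, (K y : ℂ) * f y‖ / heatKernel n x 1 ≤ (c₂ * I₁) / heatKernel n x 1 :=
            (div_le_div_iff_of_pos_right (hweight x)).mpr hWb
      _ = I₁ * (c₂ / heatKernel n x 1) := by ring
      _ = I₁ * (t^(-(n:ℝ)/2) * rexp (‖x‖^2/4 - ‖x‖^2/(16*t))) := by rw [hch]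
      _ ≤ I₁ * (t^(-(n:ℝ)/2) * rexp (R^2 - R^2/(4*t))) := by
            apply mul_le_mul_of_nonneg_left ?_ hI₁0
            apply mul_le_mul_of_nonneg_left ?_ (by positivity)
            exact Real.exp_le_exp.mpr hexp2
      _ = (I₁ * rexp (R^2)) * (t^(-(n:ℝ)/2) * rexp (-(R^2)/(4*t))) := by
            rw [show R^2 - R^2/(4*t) = R^2 + (-(R^2)/(4*t)) by ring, Real.exp_add]
            ring
      _ ≤ C*ε₁ + (C*(2*M)*2^((n:ℝ)/2)) * rexp (-δ^2/(8*t))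
            + (I₁ * rexp (R^2)) * (t^(-(n:ℝ)/2) * rexp (-(R^2)/(4*t))) := by
            have h01 : (0:ℝ) ≤ C*ε₁ := by positivity
            have h02 : (0:ℝ) ≤ (C*(2*M)*2^((n:ℝ)/2)) * rexp (-δ^2/(8*t)) := by positivity
            linarith
  -- limit of the bound
  have hlim : Tendsto (fun t : ℝ => C*ε₁ + (C*(2*M)*2^((n:ℝ)/2)) * rexp (-δ^2/(8*t))
          + (I₁ * rexp (R^2)) * (t^(-(n:ℝ)/2) * rexp (-(R^2)/(4*t))))
      (𝓝[>] (0:ℝ)) (𝓝 (C*ε₁ + (C*(2*M)*2^((n:ℝ)/2)) * 0 + (I₁ * rexp (R^2)) * 0)) := by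
    have hinv : Tendsto (fun t : ℝ => t⁻¹) (𝓝[>] (0:ℝ)) atTop := tendsto_inv_nhdsGT_zero
    have T2 : Tendsto (fun t : ℝ => rexp (-δ^2/(8*t))) (𝓝[>] (0:ℝ)) (𝓝 0) := by
      have h1 : Tendsto (fun t : ℝ => -(δ^2/8 * t⁻¹)) (𝓝[>] (0:ℝ)) atBot := by
        rw [tendsto_neg_atBot_iff]
        exact hinv.const_mul_atTop (by positivity)
      have := Real.tendsto_exp_atBot.comp h1
      apply this.congr
      intro t
      simp only [Function.comp_apply]
      congr 1
      ring
    have T3 : Tendsto (fun t : ℝ => t^(-(n:ℝ)/2) * rexp (-(R^2)/(4*t))) (𝓝[>] (0:ℝ)) (𝓝 0) := by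
      have h0 := tendsto_rpow_mul_exp_neg_mul_atTop_nhds_zero ((n:ℝ)/2) (R^2/4) (by positivity)
      have h1 := h0.comp hinv
      apply h1.congr'
      filter_upwards [self_mem_nhdsWithin] with t ht
      have ht : (0:ℝ) < t := ht
      simp only [Function.comp_apply]
      rw [Real.inv_rpow ht.le, ← Real.rpow_neg ht.le, neg_div]
      congr 2
      field_simp
    exact (tendsto_const_nhds.add (T2.const_mul _)).add (T3.const_mul _)
  have hhalf : C*ε₁ + (C*(2*M)*2^((n:ℝ)/2)) * 0 + (I₁ * rexp (R^2)) * 0 < ε := by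
    have : C * ε₁ = ε/2 := by
      rw [hε₁def]; field_simp
    rw [this]; simp; linarith
  have hev : ∀ᶠ t in 𝓝[>] (0:ℝ), (C*ε₁ + (C*(2*M)*2^((n:ℝ)/2)) * rexp (-δ^2/(8*t))
          + (I₁ * rexp (R^2)) * (t^(-(n:ℝ)/2) * rexp (-(R^2)/(4*t)))) < ε :=
    hlim.eventually_lt_const hhalf
  have hmem : Ioc (0:ℝ) (1/4) ∈ 𝓝[>] (0:ℝ) := Ioc_mem_nhdsGT_of_mem ⟨le_refl _, by norm_num⟩
  filter_upwards [hev, hmem] with t hlt ht x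
  exact lt_of_le_of_lt (key t ht.1 ht.2 x) hlt
end
end

section
/- Let {μ_j} be a sequence of positive Borel measures on ℝⁿ and μ a positive Borel measure on ℝⁿ, all belonging to M (i.e. Wμ_j(0,t) and Wμ(0,t) are finite for all t > 0). If the sequence of Gauss-Weierstrass integrals {Wμ_j} converges to Wμ uniformly on every compact subset of ℝ^{n+1}_+, then {μ_j} converges to μ in the weak* sense: for every continuous compactly supported φ : ℝⁿ → ℂ, ∫ φ dμ_j → ∫ φ dμ. -/
open MeasureTheory Metric Filter Real Topology Set ENNReal

noncomputable section

variable {n : ℕ}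

lemma hk_pos {x : EuclideanSpace ℝ (Fin n)} {t : ℝ} (ht : 0 < t) : 0 < heatKernel n x t := by
  unfold heatKernel; positivity

lemma hk_cont {t : ℝ} :
    Continuous (fun p : EuclideanSpace ℝ (Fin n) × EuclideanSpace ℝ (Fin n) =>
      heatKernel n (p.1 - p.2) t) := by
  unfold heatKernel; fun_prop

lemma rexp_integrable {b : ℝ} (hb : 0 < b) :
    Integrable (fun x : EuclideanSpace ℝ (Fin n) => rexp (-b * ‖x‖ ^ 2)) := by
  have h := (GaussianFourier.integrable_cexp_neg_mul_sq_norm_add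
    (V := EuclideanSpace ℝ (Fin n)) (b := (b:ℂ)) (by simpa using hb) 0 0).norm
  refine h.congr (Eventually.of_forall fun x => ?_)
  simp only [Complex.norm_exp]
  congr 1
  rw [show (-(b:ℂ) * (‖x‖:ℂ) ^ 2 + 0 * ((inner ℝ 0 x : ℝ):ℂ)) = ((-b * ‖x‖^2 : ℝ) : ℂ) by
    push_cast; ring, Complex.ofReal_re]

lemma rexp_integral {b : ℝ} (hb : 0 < b) :
    ∫ x : EuclideanSpace ℝ (Fin n), rexp (-b * ‖x‖ ^ 2) = (π / b) ^ ((n:ℝ) / 2) := by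
  rw [GaussianFourier.integral_rexp_neg_mul_sq_norm hb]
  simp [finrank_euclideanSpace_fin]

lemma hk_integrable {t : ℝ} (ht : 0 < t) (y : EuclideanSpace ℝ (Fin n)) :
    Integrable (fun x : EuclideanSpace ℝ (Fin n) => heatKernel n (x - y) t) := by
  have h := ((rexp_integrable (n := n) (show (0:ℝ) < 1/(4*t) by positivity)).const_mul
    ((4 * π * t) ^ (-(n : ℝ) / 2))).comp_sub_right y
  refine h.congr (Eventually.of_forall fun x => ?_)
  show (4 * π * t) ^ (-(n:ℝ) / 2) * rexp (-(1/(4*t)) * ‖x - y‖ ^ 2) = heatKernel n (x - y) t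
  unfold heatKernel
  congr 2
  ring

lemma hk_integral_one {t : ℝ} (ht : 0 < t) (y : EuclideanSpace ℝ (Fin n)) :
    ∫ x : EuclideanSpace ℝ (Fin n), heatKernel n (x - y) t = 1 := by
  rw [integral_sub_right_eq_self (fun x => heatKernel n x t) y]
  unfold heatKernel
  rw [integral_const_mul]
  have h1 : ∀ x : EuclideanSpace ℝ (Fin n),
      rexp (-‖x‖^2/(4*t)) = rexp (-(1/(4*t)) * ‖x‖^2) := by
    intro x; congr 1; field_simp
  rw [show (fun x : EuclideanSpace ℝ (Fin n) => rexp (-‖x‖^2/(4*t)))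
      = (fun x : EuclideanSpace ℝ (Fin n) => rexp (-(1/(4*t)) * ‖x‖^2)) from funext h1]
  rw [rexp_integral (show (0:ℝ) < 1/(4*t) by positivity)]
  have h2 : π / (1/(4*t)) = 4 * π * t := by field_simp
  rw [h2, ← Real.rpow_add (by positivity),
    show (-(n:ℝ)/2 + (n:ℝ)/2) = 0 by ring, Real.rpow_zero]



lemma exp_meas {c : ℝ} :
    Measurable (fun y : EuclideanSpace ℝ (Fin n) => ENNReal.ofReal (rexp (-‖y‖^2 / c))) := by
  fun_prop

lemma lintegral_exp_lt_top (lam : Measure (EuclideanSpace ℝ (Fin n)))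
    (h : ∀ s : ℝ, 0 < s → WInt n lam 0 s < ⊤) {c : ℝ} (hc : 0 < c) :
    ∫⁻ y, ENNReal.ofReal (rexp (-‖y‖^2 / c)) ∂lam < ⊤ := by
  have ht : (0:ℝ) < c/4 := by linarith
  have key : WInt n lam 0 (c/4) = ENNReal.ofReal ((4*π*(c/4)) ^ (-(n:ℝ)/2)) *
      ∫⁻ y, ENNReal.ofReal (rexp (-‖y‖^2 / c)) ∂lam := by
    unfold WInt
    rw [← lintegral_const_mul _ exp_meas]
    refine lintegral_congr fun y => ?_
    rw [← ENNReal.ofReal_mul (by positivity)]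
    congr 1
    unfold heatKernel
    rw [zero_sub, norm_neg]
    congr 2
    ring
  have h1 := h (c/4) ht
  rw [key] at h1
  by_contra h2
  rw [not_lt, top_le_iff] at h2
  rw [h2, ENNReal.mul_top (by simp; positivity)] at h1
  exact absurd h1 (lt_irrefl _)

lemma meas_closedBall_lt_top (lam : Measure (EuclideanSpace ℝ (Fin n)))
    (h : ∀ s : ℝ, 0 < s → WInt n lam 0 s < ⊤) {r : ℝ} :
    lam (closedBall 0 r) < ⊤ := by
  have hfin := lintegral_exp_lt_top lam h (c := 32) (by norm_num)
  have hle : ENNReal.ofReal (rexp (-r^2/32)) * lam (closedBall 0 r) ≤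
      ∫⁻ y, ENNReal.ofReal (rexp (-‖y‖^2/32)) ∂lam := by
    calc ENNReal.ofReal (rexp (-r^2/32)) * lam (closedBall 0 r)
        = ∫⁻ _ in closedBall 0 r, ENNReal.ofReal (rexp (-r^2/32)) ∂lam := by
          rw [setLIntegral_const]
      _ ≤ ∫⁻ y in closedBall 0 r, ENNReal.ofReal (rexp (-‖y‖^2/32)) ∂lam := by
          refine setLIntegral_mono (exp_meas) fun y hy => ?_
          apply ENNReal.ofReal_le_ofReal
          apply Real.exp_le_exp.2
          have hy' : ‖y‖ ≤ r := by simpa [dist_eq_norm] using hy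
          have : ‖y‖^2 ≤ r^2 := by
            apply pow_le_pow_left₀ (norm_nonneg _) hy'
          linarith
      _ ≤ ∫⁻ y, ENNReal.ofReal (rexp (-‖y‖^2/32)) ∂lam := setLIntegral_le_lintegral _ _
  by_contra h2
  rw [not_lt, top_le_iff] at h2
  rw [h2, ENNReal.mul_top (by simp; positivity)] at hle
  rw [top_le_iff] at hle
  rw [hle] at hfin
  exact absurd hfin (lt_irrefl _)

lemma isFiniteOnCompacts (lam : Measure (EuclideanSpace ℝ (Fin n)))
    (h : ∀ s : ℝ, 0 < s → WInt n lam 0 s < ⊤) : IsFiniteMeasureOnCompacts lam := by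
  constructor
  intro K hK
  obtain ⟨r, hr⟩ := hK.isBounded.subset_closedBall 0
  exact lt_of_le_of_lt (measure_mono hr) (meas_closedBall_lt_top lam h)

lemma sigmaFinite_of (lam : Measure (EuclideanSpace ℝ (Fin n)))
    (h : ∀ s : ℝ, 0 < s → WInt n lam 0 s < ⊤) : SigmaFinite lam := by
  haveI := isFiniteOnCompacts lam h
  infer_instance

lemma integrable_exp_lam (lam : Measure (EuclideanSpace ℝ (Fin n)))
    (h : ∀ s : ℝ, 0 < s → WInt n lam 0 s < ⊤) {c : ℝ} (hc : 0 < c) :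
    Integrable (fun y : EuclideanSpace ℝ (Fin n) => rexp (-‖y‖^2 / c)) lam := by
  refine ⟨(Continuous.aestronglyMeasurable (by fun_prop)), ?_⟩
  rw [hasFiniteIntegral_iff_norm]
  have : ∀ y : EuclideanSpace ℝ (Fin n),
      ENNReal.ofReal ‖rexp (-‖y‖^2 / c)‖ = ENNReal.ofReal (rexp (-‖y‖^2 / c)) := by
    intro y; rw [Real.norm_eq_abs, abs_of_pos (Real.exp_pos _)]
  rw [lintegral_congr this]
  exact lintegral_exp_lt_top lam h hc


def conv (n : ℕ) (f : EuclideanSpace ℝ (Fin n) → ℝ) (t : ℝ)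
    (y : EuclideanSpace ℝ (Fin n)) : ℝ :=
  ∫ x, f x * heatKernel n (x - y) t

variable {f : EuclideanSpace ℝ (Fin n) → ℝ} {R M t δ ε₀ : ℝ}

lemma integrable_mul_hk (hf : Continuous f) (hb : ∀ x, |f x| ≤ M) (ht : 0 < t)
    (y : EuclideanSpace ℝ (Fin n)) :
    Integrable (fun x => f x * heatKernel n (x - y) t) :=
  (hk_integrable ht y).bdd_mul hf.aestronglyMeasurable
    (c := M) (Eventually.of_forall fun x => by simpa [Real.norm_eq_abs] using hb x)

lemma rpow_ratio (ht : 0 < t) :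
    (4*π*t) ^ (-(n:ℝ)/2) * (8*π*t) ^ ((n:ℝ)/2) = 2 ^ ((n:ℝ)/2) := by
  have hA : (0:ℝ) < 4*π*t := by positivity
  rw [show (8*π*t) = 2*(4*π*t) by ring]
  generalize hgen : (4*π*t : ℝ) = A at hA ⊢
  rw [Real.mul_rpow (by norm_num : (0:ℝ) ≤ 2) hA.le, ← mul_assoc,
    mul_comm (A ^ (-(n:ℝ)/2)) ((2:ℝ) ^ ((n:ℝ)/2)), mul_assoc,
    ← Real.rpow_add hA, show (-(n:ℝ)/2 + (n:ℝ)/2) = 0 by ring,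
    Real.rpow_zero, mul_one]

lemma conv_near (hf : Continuous f) (hb : ∀ x, |f x| ≤ M) (ht : 0 < t) (hδ : 0 < δ)
    (hε₀ : 0 ≤ ε₀) (huc : ∀ x y : EuclideanSpace ℝ (Fin n), ‖x - y‖ ≤ δ → |f x - f y| ≤ ε₀)
    (y : EuclideanSpace ℝ (Fin n)) :
    |conv n f t y - f y| ≤ ε₀ + 2 * M * 2 ^ ((n:ℝ)/2) * rexp (-δ^2/(8*t)) := by
  have hM : 0 ≤ M := le_trans (abs_nonneg _) (hb 0)
  set c₁ : ℝ := (4*π*t) ^ (-(n:ℝ)/2) * rexp (-δ^2/(8*t)) with hc₁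
  have hc₁0 : 0 ≤ c₁ := by positivity
  set g : EuclideanSpace ℝ (Fin n) → ℝ := fun z => c₁ * rexp (-(1/(8*t)) * ‖z‖^2) with hg
  have hgint : Integrable (fun x => g (x - y)) := by
    exact ((rexp_integrable (show (0:ℝ) < 1/(8*t) by positivity)).const_mul c₁).comp_sub_right y
  have hgval : ∫ x, g (x - y) = c₁ * (8*π*t) ^ ((n:ℝ)/2) := by
    rw [integral_sub_right_eq_self g y]
    rw [hg, integral_const_mul, rexp_integral (show (0:ℝ) < 1/(8*t) by positivity)]
    congr 2
    rw [div_eq_mul_inv, one_div, inv_inv]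
    ring
  -- pointwise bound
  have hpt : ∀ x, |(f x - f y) * heatKernel n (x - y) t| ≤
      ε₀ * heatKernel n (x - y) t + 2*M * g (x - y) := by
    intro x
    rw [abs_mul, abs_of_pos (hk_pos ht)]
    by_cases hxy : ‖x - y‖ ≤ δ
    · have h1 : |f x - f y| * heatKernel n (x - y) t ≤ ε₀ * heatKernel n (x - y) t :=
        mul_le_mul_of_nonneg_right (huc x y hxy) (hk_pos ht).le
      have h2 : 0 ≤ 2*M * g (x - y) := by positivity
      linarith
    · push_neg at hxy
      have h1 : |f x - f y| ≤ 2*M := by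
        calc |f x - f y| ≤ |f x| + |f y| := abs_sub _ _
        _ ≤ 2*M := by have := hb x; have := hb y; linarith
      have h2 : heatKernel n (x - y) t ≤ g (x - y) := by
        show heatKernel n (x - y) t ≤ c₁ * rexp (-(1/(8*t)) * ‖x - y‖^2)
        rw [hc₁, mul_assoc, ← Real.exp_add]
        unfold heatKernel
        apply mul_le_mul_of_nonneg_left _ (by positivity)
        apply Real.exp_le_exp.2
        have hδ2 : δ^2 ≤ ‖x - y‖^2 := by nlinarith [norm_nonneg (x - y)]
        have h8 : (0:ℝ) < 8*t := by linarith
        rw [show -δ^2/(8*t) + -(1/(8*t)) * ‖x - y‖^2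
            = -((δ^2 + ‖x - y‖^2)/(8*t)) by ring,
          show -‖x - y‖^2/(4*t) = -(‖x - y‖^2/(4*t)) by ring, neg_le_neg_iff,
          div_le_div_iff₀ h8 (by linarith)]
        nlinarith
      have h3 : |f x - f y| * heatKernel n (x - y) t ≤ 2*M * g (x - y) :=
        mul_le_mul h1 h2 (hk_pos ht).le (by linarith)
      have h4 : 0 ≤ ε₀ * heatKernel n (x - y) t := mul_nonneg hε₀ (hk_pos ht).le
      linarith
  -- rewrite difference as single integral
  have hfyint := (hk_integrable (n := n) ht y).const_mul (f y)
  have h1 : conv n f t y - f y = ∫ x, (f x - f y) * heatKernel n (x - y) t := by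
    have heq : (fun x => (f x - f y) * heatKernel n (x - y) t)
        = fun x => f x * heatKernel n (x - y) t - f y * heatKernel n (x - y) t := by
      funext x; ring
    rw [heq, integral_sub (integrable_mul_hk hf hb ht y) hfyint,
      integral_const_mul, hk_integral_one ht y, mul_one]
    rfl
  rw [h1]
  calc |∫ x, (f x - f y) * heatKernel n (x - y) t|
      ≤ ∫ x, |(f x - f y) * heatKernel n (x - y) t| := by
        simpa [Real.norm_eq_abs, abs_mul] using
          norm_integral_le_integral_norm (μ := volume)
            (fun x => (f x - f y) * heatKernel n (x - y) t)
    _ ≤ ∫ x, (ε₀ * heatKernel n (x - y) t + 2*M * g (x - y)) := by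
        refine integral_mono ?_ ?_ hpt
        · exact ((integrable_mul_hk hf hb ht y).sub hfyint).congr
            (Eventually.of_forall fun x => by simp [sub_mul]) |>.abs
        · exact ((hk_integrable ht y).const_mul ε₀).add (hgint.const_mul (2*M))
    _ = ε₀ + 2 * M * 2 ^ ((n:ℝ)/2) * rexp (-δ^2/(8*t)) := by
        rw [integral_add ((hk_integrable ht y).const_mul ε₀) (hgint.const_mul (2*M)),
          integral_const_mul, integral_const_mul, hk_integral_one ht y, mul_one, hgval, hc₁]
        linear_combination (2*M*rexp (-δ^2/(8*t))) * rpow_ratio (n := n) ht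

lemma conv_far (hf : Continuous f) (hb : ∀ x, |f x| ≤ M)
    (hsupp : Function.support f ⊆ closedBall 0 R) (hR : 0 < R) (ht : 0 < t) (ht1 : t ≤ 1)
    {y : EuclideanSpace ℝ (Fin n)} (hy : 2*R ≤ ‖y‖) :
    |conv n f t y| ≤ (M * (volume (closedBall (0:EuclideanSpace ℝ (Fin n)) R)).toReal
      * ((4*π*t) ^ (-(n:ℝ)/2) * rexp (-R^2/(8*t)))) * rexp (-‖y‖^2/32) := by
  have hM : 0 ≤ M := le_trans (abs_nonneg _) (hb 0)
  set C : ℝ := M * ((4*π*t) ^ (-(n:ℝ)/2) * rexp (-R^2/(8*t))) * rexp (-‖y‖^2/32) with hC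
  have hC0 : 0 ≤ C := by positivity
  have hvol : volume (closedBall (0:EuclideanSpace ℝ (Fin n)) R) < ⊤ :=
    measure_closedBall_lt_top
  have hgint : Integrable ((closedBall (0:EuclideanSpace ℝ (Fin n)) R).indicator
      (fun _ => C)) := by
    rw [integrable_indicator_iff measurableSet_closedBall]
    exact integrableOn_const hvol.ne
  have hpt : ∀ x, ‖f x * heatKernel n (x - y) t‖ ≤
      (closedBall (0:EuclideanSpace ℝ (Fin n)) R).indicator (fun _ => C) x := by
    intro x
    by_cases hx : x ∈ closedBall (0:EuclideanSpace ℝ (Fin n)) R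
    · rw [indicator_of_mem hx]
      have hxR : ‖x‖ ≤ R := by simpa [dist_eq_norm] using hx
      have hxy : ‖y‖/2 ≤ ‖x - y‖ := by
        have h1 : ‖y‖ - ‖x‖ ≤ ‖x - y‖ := by
          have := norm_sub_norm_le (y) (x)
          have h2 : ‖y - x‖ = ‖x - y‖ := norm_sub_rev _ _
          linarith [abs_le.1 (abs_norm_sub_norm_le y x)]
        linarith
      have hexp : rexp (-‖x - y‖^2/(4*t)) ≤ rexp (-R^2/(8*t)) * rexp (-‖y‖^2/32) := by
        rw [← Real.exp_add]
        apply Real.exp_le_exp.2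
        have hy2 : ‖y‖^2/4 ≤ ‖x - y‖^2 := by nlinarith [norm_nonneg y, norm_nonneg (x - y)]
        have e1 : -‖x - y‖^2/(4*t) ≤ -‖y‖^2/(16*t) := by
          rw [neg_div, neg_div, neg_le_neg_iff, div_le_div_iff₀ (by linarith) (by linarith)]
          nlinarith
        have e2 : -‖y‖^2/(16*t) ≤ -R^2/(8*t) + -‖y‖^2/32 := by
          have h4R : 4*R^2 ≤ ‖y‖^2 := by nlinarith [hy, hR.le, norm_nonneg y]
          have e3 : R^2/(8*t) ≤ ‖y‖^2/(32*t) := by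
            rw [div_le_div_iff₀ (by linarith) (by linarith)]
            nlinarith [h4R, ht.le]
          have e4 : ‖y‖^2/32 ≤ ‖y‖^2/(32*t) := by
            apply div_le_div_of_nonneg_left (by positivity) (by linarith)
            nlinarith
          have e5 : ‖y‖^2/(32*t) + ‖y‖^2/(32*t) = ‖y‖^2/(16*t) := by
            field_simp
            ring
          have h6 : R^2/(8*t) + ‖y‖^2/32 ≤ ‖y‖^2/(16*t) := by linarith
          rw [neg_div, neg_div, neg_div]
          linarith
        linarith
      rw [Real.norm_eq_abs, abs_mul, abs_of_pos (hk_pos ht), hC]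
      unfold heatKernel
      calc |f x| * ((4*π*t) ^ (-(n:ℝ)/2) * rexp (-‖x - y‖^2/(4*t)))
          ≤ M * ((4*π*t) ^ (-(n:ℝ)/2) * (rexp (-R^2/(8*t)) * rexp (-‖y‖^2/32))) := by
            apply mul_le_mul (hb x) _ (by positivity) hM
            apply mul_le_mul_of_nonneg_left hexp (by positivity)
        _ = M * ((4*π*t) ^ (-(n:ℝ)/2) * rexp (-R^2/(8*t))) * rexp (-‖y‖^2/32) := by ring
    · rw [indicator_of_notMem hx]
      have hfx : f x = 0 := by
        by_contra hne
        exact hx (hsupp (Function.mem_support.2 hne))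
      simp [hfx]
  have key := norm_integral_le_of_norm_le hgint (Eventually.of_forall hpt)
  rw [integral_indicator_const _ measurableSet_closedBall] at key
  have habs : |conv n f t y| = ‖∫ x, f x * heatKernel n (x - y) t‖ := by
    rw [Real.norm_eq_abs]
    rfl
  rw [habs]
  calc ‖∫ x, f x * heatKernel n (x - y) t‖
      ≤ (volume (closedBall (0:EuclideanSpace ℝ (Fin n)) R)).toReal • C := key
    _ = (M * (volume (closedBall (0:EuclideanSpace ℝ (Fin n)) R)).toReal
        * ((4*π*t) ^ (-(n:ℝ)/2) * rexp (-R^2/(8*t)))) * rexp (-‖y‖^2/32) := by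
        rw [smul_eq_mul, hC]
        ring

lemma conv_cont (hf : Continuous f) (hb : ∀ x, |f x| ≤ M)
    (hsupp : Function.support f ⊆ closedBall 0 R) (ht : 0 < t) :
    Continuous (conv n f t) := by
  have hM : 0 ≤ M := le_trans (abs_nonneg _) (hb 0)
  have hvol : volume (closedBall (0:EuclideanSpace ℝ (Fin n)) R) < ⊤ :=
    measure_closedBall_lt_top
  apply continuous_of_dominated (bound := (closedBall (0:EuclideanSpace ℝ (Fin n)) R).indicator
      (fun _ => M * (4*π*t) ^ (-(n:ℝ)/2)))
  · intro y
    exact (integrable_mul_hk hf hb ht y).1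
  · intro y
    refine Eventually.of_forall fun x => ?_
    by_cases hx : x ∈ closedBall (0:EuclideanSpace ℝ (Fin n)) R
    · rw [indicator_of_mem hx]
      rw [Real.norm_eq_abs, abs_mul, abs_of_pos (hk_pos ht)]
      have h1 : heatKernel n (x - y) t ≤ (4*π*t) ^ (-(n:ℝ)/2) := by
        unfold heatKernel
        nth_rewrite 2 [← mul_one ((4*π*t) ^ (-(n:ℝ)/2))]
        apply mul_le_mul_of_nonneg_left _ (by positivity)
        rw [Real.exp_le_one_iff, neg_div]
        have : (0:ℝ) ≤ ‖x - y‖^2/(4*t) := by positivity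
        linarith
      exact mul_le_mul (hb x) h1 (hk_pos ht).le (by positivity)
    · rw [indicator_of_notMem hx]
      have hfx : f x = 0 := by
        by_contra hne
        exact hx (hsupp (Function.mem_support.2 hne))
      simp [hfx]
  · rw [integrable_indicator_iff measurableSet_closedBall]
    exact integrableOn_const hvol.ne
  · refine Eventually.of_forall fun x => ?_
    have : Continuous fun y : EuclideanSpace ℝ (Fin n) => heatKernel n (x - y) t := by
      unfold heatKernel
      fun_prop
    exact (continuous_const.mul this)

lemma tendsto_aux1 {c : ℝ} (hc : 0 < c) :
    Tendsto (fun t : ℝ => rexp (-c/(8*t))) (𝓝[>] (0:ℝ)) (𝓝 0) := by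
  have h1 : Tendsto (fun t : ℝ => (c/8) * t⁻¹) (𝓝[>] (0:ℝ)) atTop :=
    Tendsto.const_mul_atTop (by positivity) tendsto_inv_nhdsGT_zero
  have h2 : Tendsto (fun u : ℝ => rexp (-u)) atTop (𝓝 0) :=
    Real.tendsto_exp_neg_atTop_nhds_zero
  refine (h2.comp h1).congr fun t => ?_
  simp only [Function.comp]
  congr 1
  ring

lemma tendsto_aux2 {c : ℝ} (hc : 0 < c) :
    Tendsto (fun t : ℝ => (4*π*t) ^ (-(n:ℝ)/2) * rexp (-c/(8*t)))
      (𝓝[>] (0:ℝ)) (𝓝 0) := by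
  have h0 := tendsto_rpow_mul_exp_neg_mul_atTop_nhds_zero ((n:ℝ)/2) (c/8) (by positivity)
  have h1 : Tendsto (fun t : ℝ => t⁻¹) (𝓝[>] (0:ℝ)) atTop := tendsto_inv_nhdsGT_zero
  have h2 := (h0.comp h1).const_mul ((4*π) ^ (-(n:ℝ)/2))
  rw [mul_zero] at h2
  refine h2.congr' ?_
  filter_upwards [self_mem_nhdsWithin] with t ht
  rw [mem_Ioi] at ht
  simp only [Function.comp]
  rw [show (4*π*t) = (4*π)*t by ring,
    show (-(n:ℝ)/2) = -((n:ℝ)/2) by ring,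
    Real.mul_rpow (by positivity) ht.le,
    Real.rpow_neg (by positivity : (0:ℝ) ≤ 4*π), Real.rpow_neg ht.le,
    Real.inv_rpow ht.le]
  rw [show -(c/8) * t⁻¹ = -c/(8*t) by ring]
  ring

lemma conv_close (hf : Continuous f) (hcs : HasCompactSupport f)
    (hsupp : Function.support f ⊆ closedBall 0 R) (hR : 0 < R)
    {ε' : ℝ} (hε' : 0 < ε') :
    ∀ᶠ t in 𝓝[>] (0:ℝ), (0 < t) ∧ ∀ y : EuclideanSpace ℝ (Fin n),
      |conv n f t y - f y| ≤ ε' * rexp (-‖y‖^2/32) := by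
  obtain ⟨M, hb⟩ := hcs.exists_bound_of_continuous hf
  have hb' : ∀ x, |f x| ≤ M := fun x => by simpa [Real.norm_eq_abs] using hb x
  have hM : 0 ≤ M := le_trans (abs_nonneg _) (hb' 0)
  set ε₀ : ℝ := ε' * rexp (-R^2/8) / 2 with hε₀def
  have hε₀ : 0 < ε₀ := by positivity
  obtain ⟨δ, hδ, hδprop⟩ :=
    Metric.uniformContinuous_iff.1 (hcs.uniformContinuous_of_continuous hf) ε₀ hε₀
  have huc' : ∀ x y : EuclideanSpace ℝ (Fin n), ‖x - y‖ ≤ δ/2 → |f x - f y| ≤ ε₀ := by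
    intro x y hxy
    have hd : dist x y < δ := by rw [dist_eq_norm]; linarith
    have := hδprop hd
    rw [Real.dist_eq] at this
    linarith
  have E1 : ∀ᶠ t in 𝓝[>] (0:ℝ), 0 < t :=
    eventually_mem_nhdsWithin.mono fun t ht => ht
  have E2 : ∀ᶠ t in 𝓝[>] (0:ℝ), t ≤ 1 := by
    refine eventually_of_mem (nhdsWithin_le_nhds
      (Iio_mem_nhds (by norm_num : (0:ℝ) < 1))) fun t ht => le_of_lt ht
  have E3 : ∀ᶠ t in 𝓝[>] (0:ℝ),
      2*M * 2 ^ ((n:ℝ)/2) * rexp (-(δ/2)^2/(8*t)) ≤ ε₀ := by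
    have h := (tendsto_aux1 (c := (δ/2)^2) (by positivity)).const_mul
      (2*M*2^((n:ℝ)/2))
    rw [mul_zero] at h
    exact (h.eventually_lt_const hε₀).mono fun t ht => by
      calc 2*M * 2 ^ ((n:ℝ)/2) * rexp (-(δ/2)^2/(8*t))
          = 2*M*2^((n:ℝ)/2) * rexp (-(δ/2)^2/(8*t)) := by ring
        _ ≤ ε₀ := le_of_lt ht
  have E4 : ∀ᶠ t in 𝓝[>] (0:ℝ),
      M * (volume (closedBall (0:EuclideanSpace ℝ (Fin n)) R)).toReal *
        ((4*π*t) ^ (-(n:ℝ)/2) * rexp (-R^2/(8*t))) ≤ ε' := by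
    have h := (tendsto_aux2 (n := n) (c := R^2) (by positivity)).const_mul
      (M * (volume (closedBall (0:EuclideanSpace ℝ (Fin n)) R)).toReal)
    rw [mul_zero] at h
    exact (h.eventually_lt_const hε').mono fun t ht => le_of_lt ht
  filter_upwards [E1, E2, E3, E4] with t ht ht1 hE3 hE4
  refine ⟨ht, fun y => ?_⟩
  by_cases hy : ‖y‖ ≤ 2*R
  · have hnear := conv_near hf hb' ht (by positivity : (0:ℝ) < δ/2) hε₀.le huc' y
    have h1 : ε₀ + 2*M*2^((n:ℝ)/2) * rexp (-(δ/2)^2/(8*t)) ≤ 2*ε₀ := by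
      have : 2*M * 2 ^ ((n:ℝ)/2) * rexp (-(δ/2)^2/(8*t))
          = 2*M*2^((n:ℝ)/2) * rexp (-(δ/2)^2/(8*t)) := by ring
      linarith [hE3]
    have h2 : 2*ε₀ = ε' * rexp (-R^2/8) := by rw [hε₀def]; ring
    have h3 : rexp (-R^2/8) ≤ rexp (-‖y‖^2/32) := by
      apply Real.exp_le_exp.2
      have h4 : ‖y‖^2 ≤ 4*R^2 := by nlinarith [norm_nonneg y]
      rw [neg_div, neg_div, neg_le_neg_iff]
      linarith
    calc |conv n f t y - f y|
        ≤ ε₀ + 2*M*2^((n:ℝ)/2) * rexp (-(δ/2)^2/(8*t)) := by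
          have := hnear
          linarith [hnear]
      _ ≤ 2*ε₀ := h1
      _ = ε' * rexp (-R^2/8) := h2
      _ ≤ ε' * rexp (-‖y‖^2/32) := mul_le_mul_of_nonneg_left h3 hε'.le
  · push_neg at hy
    have hfy : f y = 0 := by
      by_contra hne
      have hmem := hsupp (Function.mem_support.2 hne)
      rw [mem_closedBall, dist_zero_right] at hmem
      nlinarith
    have hfar := conv_far hf hb' hsupp hR ht ht1 (le_of_lt hy)
    rw [hfy, sub_zero]
    calc |conv n f t y|
        ≤ (M * (volume (closedBall (0:EuclideanSpace ℝ (Fin n)) R)).toReal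
            * ((4*π*t) ^ (-(n:ℝ)/2) * rexp (-R^2/(8*t)))) * rexp (-‖y‖^2/32) := hfar
      _ ≤ ε' * rexp (-‖y‖^2/32) :=
          mul_le_mul_of_nonneg_right hE4 (Real.exp_pos _).le


lemma hk_pointwise (ht : 0 < t) {x y : EuclideanSpace ℝ (Fin n)} (hx : ‖x‖ ≤ R) :
    heatKernel n (x - y) t ≤
      ((4*π*t) ^ (-(n:ℝ)/2) * rexp (R^2/(4*t))) * rexp (-‖y‖^2/(8*t)) := by
  unfold heatKernel
  conv_rhs => rw [mul_assoc, ← Real.exp_add]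
  apply mul_le_mul_of_nonneg_left _ (by positivity)
  apply Real.exp_le_exp.2
  have htri : ‖y‖ ≤ ‖x - y‖ + ‖x‖ := by
    have h := norm_sub_le x (x - y)
    simpa [sub_sub_cancel] using h.trans (by rw [add_comm])
  have hsq : ‖y‖^2 ≤ 2*‖x - y‖^2 + 2*R^2 := by
    nlinarith [norm_nonneg y, norm_nonneg (x - y), norm_nonneg x, htri, hx,
      sq_nonneg (‖x - y‖ - ‖x‖), sq_nonneg (R - ‖x‖)]
  rw [show R^2/(4*t) + -‖y‖^2/(8*t) = (2*R^2 - ‖y‖^2)/(8*t) by field_simp; ring,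
    show -‖x - y‖^2/(4*t) = (-2*‖x - y‖^2)/(8*t) by field_simp; ring,
    div_le_div_iff₀ (by linarith) (by linarith)]
  nlinarith [ht.le]

lemma prod_integrable (hf : Continuous f) (hb : ∀ x, |f x| ≤ M)
    (hsupp : Function.support f ⊆ closedBall 0 R)
    (lam : Measure (EuclideanSpace ℝ (Fin n)))
    (hlam : ∀ s : ℝ, 0 < s → WInt n lam 0 s < ⊤) (ht : 0 < t) :
    Integrable (Function.uncurry fun x y => f x * heatKernel n (x - y) t)
      ((volume : Measure (EuclideanSpace ℝ (Fin n))).prod lam) := by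
  have hM : 0 ≤ M := le_trans (abs_nonneg _) (hb 0)
  haveI := sigmaFinite_of lam hlam
  have hmeas : Continuous (Function.uncurry fun x y : EuclideanSpace ℝ (Fin n) =>
      f x * heatKernel n (x - y) t) := (hf.comp continuous_fst).mul hk_cont
  set c₂ : ℝ := (4*π*t) ^ (-(n:ℝ)/2) * rexp (R^2/(4*t)) with hc₂
  have hc₂0 : 0 ≤ c₂ := by positivity
  have hGint : Integrable (fun z : EuclideanSpace ℝ (Fin n) × EuclideanSpace ℝ (Fin n) =>
      ((closedBall (0:EuclideanSpace ℝ (Fin n)) R).indicator (fun _ => M * c₂)) z.1 *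
        rexp (-‖z.2‖^2/(8*t))) ((volume).prod lam) := by
    have h1 : Integrable ((closedBall (0:EuclideanSpace ℝ (Fin n)) R).indicator
        (fun _ => M * c₂)) (volume : Measure (EuclideanSpace ℝ (Fin n))) := by
      rw [integrable_indicator_iff measurableSet_closedBall]
      exact integrableOn_const measure_closedBall_lt_top.ne
    have h2 : Integrable (fun y : EuclideanSpace ℝ (Fin n) => rexp (-‖y‖^2/(8*t))) lam :=
      integrable_exp_lam lam hlam (by linarith)
    exact h1.mul_prod h2
  refine hGint.mono' hmeas.aestronglyMeasurable (Eventually.of_forall fun z => ?_)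
  obtain ⟨x, y⟩ := z
  show ‖f x * heatKernel n (x - y) t‖ ≤ _
  by_cases hx : x ∈ closedBall (0:EuclideanSpace ℝ (Fin n)) R
  · rw [indicator_of_mem hx]
    have hxR : ‖x‖ ≤ R := by simpa [dist_zero_right] using hx
    rw [Real.norm_eq_abs, abs_mul, abs_of_pos (hk_pos ht)]
    calc |f x| * heatKernel n (x - y) t
        ≤ M * (c₂ * rexp (-‖y‖^2/(8*t))) := by
          apply mul_le_mul (hb x) _ (hk_pos ht).le hM
          rw [hc₂]
          exact hk_pointwise ht hxR
      _ = M * c₂ * rexp (-‖y‖^2/(8*t)) := by ring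
  · rw [indicator_of_notMem hx]
    have hfx : f x = 0 := by
      by_contra hne
      exact hx (hsupp (Function.mem_support.2 hne))
    simp [hfx]

lemma wint_toReal (lam : Measure (EuclideanSpace ℝ (Fin n))) (ht : 0 < t)
    (x : EuclideanSpace ℝ (Fin n)) :
    (WInt n lam x t).toReal = ∫ y, heatKernel n (x - y) t ∂lam := by
  rw [integral_eq_lintegral_of_nonneg_ae (Eventually.of_forall fun y => (hk_pos ht).le)
    (Continuous.aestronglyMeasurable (by unfold heatKernel; fun_prop))]
  rfl

lemma swap_eq (hf : Continuous f) (hb : ∀ x, |f x| ≤ M)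
    (hsupp : Function.support f ⊆ closedBall 0 R)
    (lam : Measure (EuclideanSpace ℝ (Fin n)))
    (hlam : ∀ s : ℝ, 0 < s → WInt n lam 0 s < ⊤) (ht : 0 < t) :
    ∫ x, f x * (WInt n lam x t).toReal = ∫ y, conv n f t y ∂lam := by
  haveI := sigmaFinite_of lam hlam
  have h1 : (fun x => f x * (WInt n lam x t).toReal)
      = fun x => ∫ y, f x * heatKernel n (x - y) t ∂lam := by
    funext x
    rw [wint_toReal lam ht x]
    exact (integral_const_mul _ _).symm
  rw [h1, integral_integral_swap (prod_integrable hf hb hsupp lam hlam ht)]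
  rfl

lemma wint_meas (lam : Measure (EuclideanSpace ℝ (Fin n)))
    (hlam : ∀ s : ℝ, 0 < s → WInt n lam 0 s < ⊤) :
    Measurable fun x => WInt n lam x t := by
  haveI := sigmaFinite_of lam hlam
  exact Measurable.lintegral_prod_right
    ((hk_cont.measurable).ennreal_ofReal)

lemma G_integrable (hf : Continuous f) (hb : ∀ x, |f x| ≤ M)
    (hsupp : Function.support f ⊆ closedBall 0 R)
    (lam : Measure (EuclideanSpace ℝ (Fin n)))
    (hlam : ∀ s : ℝ, 0 < s → WInt n lam 0 s < ⊤) (ht : 0 < t) :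
    Integrable (fun x => f x * (WInt n lam x t).toReal) := by
  have hM : 0 ≤ M := le_trans (abs_nonneg _) (hb 0)
  haveI := sigmaFinite_of lam hlam
  set c₂ : ℝ := (4*π*t) ^ (-(n:ℝ)/2) * rexp (R^2/(4*t)) with hc₂
  have hc₂0 : 0 ≤ c₂ := by positivity
  set L : ℝ≥0∞ := ∫⁻ y, ENNReal.ofReal (rexp (-‖y‖^2/(8*t))) ∂lam with hL
  have hLfin : L < ⊤ := lintegral_exp_lt_top lam hlam (by linarith)
  set K : ℝ := c₂ * L.toReal with hK
  have hK0 : 0 ≤ K := by positivity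
  have hind : Integrable ((closedBall (0:EuclideanSpace ℝ (Fin n)) R).indicator
      (fun _ => M * K)) := by
    rw [integrable_indicator_iff measurableSet_closedBall]
    exact integrableOn_const measure_closedBall_lt_top.ne
  refine hind.mono' ?_ (Eventually.of_forall fun x => ?_)
  · exact ((hf.measurable).mul
      (ENNReal.measurable_toReal.comp (wint_meas lam hlam))).aestronglyMeasurable
  by_cases hx : x ∈ closedBall (0:EuclideanSpace ℝ (Fin n)) R
  · rw [indicator_of_mem hx]
    have hxR : ‖x‖ ≤ R := by simpa [dist_zero_right] using hx
    have hwle : WInt n lam x t ≤ ENNReal.ofReal c₂ * L := by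
      unfold WInt
      rw [hL, ← lintegral_const_mul _ (by fun_prop)]
      apply lintegral_mono fun y => ?_
      rw [← ENNReal.ofReal_mul hc₂0]
      exact ENNReal.ofReal_le_ofReal (hk_pointwise ht hxR)
    have htR : (WInt n lam x t).toReal ≤ K := by
      have hne : ENNReal.ofReal c₂ * L ≠ ⊤ :=
        ENNReal.mul_ne_top ENNReal.ofReal_ne_top hLfin.ne
      have := ENNReal.toReal_mono hne hwle
      rwa [ENNReal.toReal_mul, ENNReal.toReal_ofReal hc₂0] at this
    rw [Real.norm_eq_abs, abs_mul]
    apply mul_le_mul (hb x) _ (abs_nonneg _) hM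
    rw [abs_of_nonneg ENNReal.toReal_nonneg]
    exact htR
  · rw [indicator_of_notMem hx]
    have hfx : f x = 0 := by
      by_contra hne
      exact hx (hsupp (Function.mem_support.2 hne))
    simp [hfx]

lemma close_int (hf : Continuous f) (hcs : HasCompactSupport f) (hb : ∀ x, |f x| ≤ M)
    (hsupp : Function.support f ⊆ closedBall 0 R)
    (lam : Measure (EuclideanSpace ℝ (Fin n)))
    (hlam : ∀ s : ℝ, 0 < s → WInt n lam 0 s < ⊤) (ht : 0 < t)
    {ε' B : ℝ} (hε' : 0 ≤ ε') (hB : 0 ≤ B)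
    (hgm : ∫⁻ y, ENNReal.ofReal (rexp (-‖y‖^2/32)) ∂lam ≤ ENNReal.ofReal B)
    (hptw : ∀ y, |conv n f t y - f y| ≤ ε' * rexp (-‖y‖^2/32)) :
    |(∫ x, f x * (WInt n lam x t).toReal) - ∫ y, f y ∂lam| ≤ ε' * B := by
  haveI := isFiniteOnCompacts lam hlam
  rw [swap_eq hf hb hsupp lam hlam ht]
  have hfInt : Integrable f lam := hf.integrable_of_hasCompactSupport hcs
  have hexpInt : Integrable (fun y : EuclideanSpace ℝ (Fin n) => rexp (-‖y‖^2/32)) lam :=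
    integrable_exp_lam lam hlam (by norm_num)
  have hconvInt : Integrable (conv n f t) lam := by
    refine Integrable.mono' (hfInt.abs.add (hexpInt.const_mul ε'))
      ((conv_cont hf hb hsupp ht).aestronglyMeasurable)
      (Eventually.of_forall fun y => ?_)
    have h1 := hptw y
    have h2 := abs_sub_abs_le_abs_sub (conv n f t y) (f y)
    rw [Real.norm_eq_abs]
    simp only [Pi.add_apply]
    linarith
  rw [← integral_sub hconvInt hfInt]
  calc |∫ y, (conv n f t y - f y) ∂lam|
      ≤ ∫ y, |conv n f t y - f y| ∂lam := by
        simpa [Real.norm_eq_abs] using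
          norm_integral_le_integral_norm (μ := lam) (fun y => conv n f t y - f y)
    _ ≤ ∫ y, ε' * rexp (-‖y‖^2/32) ∂lam :=
        integral_mono (hconvInt.sub hfInt).abs (hexpInt.const_mul ε')
          (fun y => hptw y)
    _ = ε' * ∫ y, rexp (-‖y‖^2/32) ∂lam := integral_const_mul _ _
    _ ≤ ε' * B := by
        apply mul_le_mul_of_nonneg_left _ hε'
        rw [integral_eq_lintegral_of_nonneg_ae
          (Eventually.of_forall fun y => (Real.exp_pos _).le)
          (Continuous.aestronglyMeasurable (by fun_prop))]
        calc (∫⁻ y, ENNReal.ofReal (rexp (-‖y‖^2/32)) ∂lam).toReal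
            ≤ (ENNReal.ofReal B).toReal :=
              ENNReal.toReal_mono ENNReal.ofReal_ne_top hgm
          _ = B := ENNReal.toReal_ofReal hB

lemma wint_eight (lam : Measure (EuclideanSpace ℝ (Fin n))) :
    WInt n lam 0 8 = ENNReal.ofReal ((32*π) ^ (-(n:ℝ)/2)) *
      ∫⁻ y, ENNReal.ofReal (rexp (-‖y‖^2/32)) ∂lam := by
  unfold WInt
  rw [← lintegral_const_mul _ exp_meas]
  refine lintegral_congr fun y => ?_
  rw [← ENNReal.ofReal_mul (by positivity)]
  congr 1
  unfold heatKernel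
  rw [zero_sub, norm_neg, show (4*π*(8:ℝ)) = 32*π by ring]
  norm_num

lemma gmass_eq (lam : Measure (EuclideanSpace ℝ (Fin n))) :
    ∫⁻ y, ENNReal.ofReal (rexp (-‖y‖^2/32)) ∂lam
      = ENNReal.ofReal ((32*π) ^ ((n:ℝ)/2)) * WInt n lam 0 8 := by
  rw [wint_eight lam, ← mul_assoc, ← ENNReal.ofReal_mul (by positivity),
    ← Real.rpow_add (by positivity), show ((n:ℝ)/2 + -(n:ℝ)/2) = 0 by ring,
    Real.rpow_zero, ENNReal.ofReal_one, one_mul]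

lemma main_real
    (μ : ℕ → Measure (EuclideanSpace ℝ (Fin n))) (ν : Measure (EuclideanSpace ℝ (Fin n)))
    (hμ : ∀ j, ∀ t : ℝ, 0 < t → WInt n (μ j) 0 t < ⊤)
    (hν : ∀ t : ℝ, 0 < t → WInt n ν 0 t < ⊤)
    (hconv : ∀ K : Set (EuclideanSpace ℝ (Fin n) × ℝ),
      K ⊆ upperHalfSpace n → IsCompact K →
      TendstoUniformlyOn (fun (j : ℕ) p => (WInt n (μ j) p.1 p.2).toReal)
        (fun p => (WInt n ν p.1 p.2).toReal) atTop K)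
    (f : EuclideanSpace ℝ (Fin n) → ℝ) (hf : Continuous f) (hcs : HasCompactSupport f) :
    Tendsto (fun j => ∫ x, f x ∂(μ j)) atTop (𝓝 (∫ x, f x ∂ν)) := by
  obtain ⟨M, hbn⟩ := hcs.exists_bound_of_continuous hf
  have hb : ∀ x, |f x| ≤ M := fun x => by simpa [Real.norm_eq_abs] using hbn x
  have hM : 0 ≤ M := le_trans (abs_nonneg _) (hb 0)
  obtain ⟨R0, hR0⟩ := hcs.isBounded.subset_closedBall 0
  set R : ℝ := max R0 1 with hRdef
  have hR : 0 < R := lt_of_lt_of_le one_pos (le_max_right _ _)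
  have hsupp : Function.support f ⊆ closedBall 0 R :=
    fun x hx => closedBall_subset_closedBall (le_max_left _ _)
      (hR0 (subset_tsupport f hx))
  set V : ℝ := (volume (closedBall (0:EuclideanSpace ℝ (Fin n)) R)).toReal with hV
  have hV0 : 0 ≤ V := ENNReal.toReal_nonneg
  set c32 : ℝ := (32*π) ^ ((n:ℝ)/2) with hc32
  have hc32pos : 0 < c32 := by positivity
  set W8 : ℝ := (WInt n ν 0 8).toReal with hW8
  have hW80 : 0 ≤ W8 := ENNReal.toReal_nonneg
  set B : ℝ := c32 * (W8 + 1) + 1 with hB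
  have hBpos : 0 < B := by positivity
  refine Metric.tendsto_nhds.2 fun ε hε => ?_
  set ε' : ℝ := ε / (4*B) with hε'def
  have hε' : 0 < ε' := by positivity
  have hε'B : ε' * B = ε/4 := by
    rw [hε'def]
    field_simp
  have hgν : ∫⁻ y, ENNReal.ofReal (rexp (-‖y‖^2/32)) ∂ν ≤ ENNReal.ofReal B := by
    rw [gmass_eq]
    have h1 : WInt n ν 0 8 = ENNReal.ofReal W8 :=
      (ENNReal.ofReal_toReal (hν 8 (by norm_num)).ne).symm
    rw [h1, ← ENNReal.ofReal_mul hc32pos.le]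
    apply ENNReal.ofReal_le_ofReal
    nlinarith
  have hsing : ({((0 : EuclideanSpace ℝ (Fin n)), (8:ℝ))} : Set _) ⊆ upperHalfSpace n := by
    intro p hp
    rw [mem_singleton_iff] at hp
    rw [hp]
    show (0:ℝ) < 8
    norm_num
  have hpt8 := (hconv _ hsing isCompact_singleton).tendsto_at (mem_singleton _)
  have hev8 : ∀ᶠ j in atTop, (WInt n (μ j) 0 8).toReal < W8 + 1 :=
    hpt8.eventually_lt_const (by linarith)
  have hgμ : ∀ᶠ j in atTop,
      ∫⁻ y, ENNReal.ofReal (rexp (-‖y‖^2/32)) ∂(μ j) ≤ ENNReal.ofReal B := by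
    filter_upwards [hev8] with j hj
    rw [gmass_eq]
    have h1 : WInt n (μ j) 0 8 = ENNReal.ofReal ((WInt n (μ j) 0 8).toReal) :=
      (ENNReal.ofReal_toReal (hμ j 8 (by norm_num)).ne).symm
    rw [h1, ← ENNReal.ofReal_mul hc32pos.le]
    apply ENNReal.ofReal_le_ofReal
    nlinarith [ENNReal.toReal_nonneg (a := WInt n (μ j) 0 8)]
  obtain ⟨t, ht, hptw⟩ := (conv_close hf hcs hsupp hR hε').exists
  set K : Set (EuclideanSpace ℝ (Fin n) × ℝ) :=
    closedBall (0:EuclideanSpace ℝ (Fin n)) R ×ˢ ({t} : Set ℝ) with hK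
  have hKsub : K ⊆ upperHalfSpace n := by
    rintro ⟨x, s⟩ ⟨hx, hs⟩
    rw [mem_singleton_iff] at hs
    show 0 < s
    rw [show s = t from hs]
    exact ht
  have hKcpt : IsCompact K := (isCompact_closedBall _ _).prod isCompact_singleton
  set η : ℝ := ε/(4*(M*V+1)) with hη
  have hηpos : 0 < η := by positivity
  have hunif := (Metric.tendstoUniformlyOn_iff.1 (hconv K hKsub hKcpt)) η hηpos
  filter_upwards [hgμ, hunif] with j hj1 hj2
  rw [Real.dist_eq]
  have hν1 : |(∫ x, f x * (WInt n ν x t).toReal) - ∫ y, f y ∂ν| ≤ ε/4 := by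
    rw [← hε'B]
    exact close_int hf hcs hb hsupp ν hν ht hε'.le (by positivity) hgν hptw
  have hμ1 : |(∫ x, f x * (WInt n (μ j) x t).toReal) - ∫ y, f y ∂(μ j)| ≤ ε/4 := by
    rw [← hε'B]
    exact close_int hf hcs hb hsupp (μ j) (hμ j) ht hε'.le (by positivity) hj1 hptw
  have hmid : |(∫ x, f x * (WInt n (μ j) x t).toReal)
      - (∫ x, f x * (WInt n ν x t).toReal)| ≤ ε/4 := by
    have hGj := G_integrable hf hb hsupp (μ j) (hμ j) ht
    have hGν := G_integrable hf hb hsupp ν hν ht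
    rw [← integral_sub hGj hGν]
    have hgint : Integrable ((closedBall (0:EuclideanSpace ℝ (Fin n)) R).indicator
        (fun _ => M * η)) := by
      rw [integrable_indicator_iff measurableSet_closedBall]
      exact integrableOn_const measure_closedBall_lt_top.ne
    have hpt : ∀ x, ‖f x * (WInt n (μ j) x t).toReal - f x * (WInt n ν x t).toReal‖ ≤
        ((closedBall (0:EuclideanSpace ℝ (Fin n)) R).indicator (fun _ => M * η)) x := by
      intro x
      by_cases hx : x ∈ closedBall (0:EuclideanSpace ℝ (Fin n)) R
      · rw [indicator_of_mem hx]
        have hmem : ((x, t) : EuclideanSpace ℝ (Fin n) × ℝ) ∈ K := by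
          rw [hK]
          exact ⟨hx, rfl⟩
        have hd := hj2 (x, t) hmem
        rw [Real.dist_eq] at hd
        have habs : |(WInt n (μ j) x t).toReal - (WInt n ν x t).toReal| ≤ η := by
          rw [abs_sub_comm]
          exact hd.le
        rw [Real.norm_eq_abs, ← mul_sub, abs_mul]
        exact mul_le_mul (hb x) habs (abs_nonneg _) hM
      · rw [indicator_of_notMem hx]
        have hfx : f x = 0 := by
          by_contra hne
          exact hx (hsupp (Function.mem_support.2 hne))
        simp [hfx]
    have key := norm_integral_le_of_norm_le hgint (Eventually.of_forall hpt)
    rw [integral_indicator_const _ measurableSet_closedBall] at key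
    have hcalc : (volume (closedBall (0:EuclideanSpace ℝ (Fin n)) R)).toReal • (M * η)
        ≤ ε/4 := by
      rw [smul_eq_mul, ← hV]
      have h1 : V * (M * η) ≤ (M*V+1) * η := by nlinarith
      have h2 : (M*V+1) * η = ε/4 := by
        rw [hη]
        field_simp
      linarith
    calc ‖∫ x, (f x * (WInt n (μ j) x t).toReal - f x * (WInt n ν x t).toReal)‖
        ≤ _ := key
      _ ≤ ε/4 := hcalc
  have t1 := abs_sub_le (∫ x, f x ∂(μ j)) (∫ x, f x * (WInt n (μ j) x t).toReal)
    (∫ x, f x ∂ν)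
  have t2 := abs_sub_le (∫ x, f x * (WInt n (μ j) x t).toReal)
    (∫ x, f x * (WInt n ν x t).toReal) (∫ x, f x ∂ν)
  have e1 : |(∫ x, f x ∂(μ j)) - ∫ x, f x * (WInt n (μ j) x t).toReal|
      = |(∫ x, f x * (WInt n (μ j) x t).toReal) - ∫ x, f x ∂(μ j)| := abs_sub_comm _ _
  linarith


/-- If the Gauss–Weierstrass integrals of a sequence of measures in `M` converge
uniformly on compact subsets of the upper half-space to the Gauss–Weierstrass
integral of `ν ∈ M`, then the measures converge to `ν` in the weak* sense. -/
theorem normal_convergence_implies_weakstar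
    (n : ℕ) (μ : ℕ → Measure (EuclideanSpace ℝ (Fin n)))
    (ν : Measure (EuclideanSpace ℝ (Fin n)))
    (hμ : ∀ j, ∀ t : ℝ, 0 < t → WInt n (μ j) 0 t < ⊤)
    (hν : ∀ t : ℝ, 0 < t → WInt n ν 0 t < ⊤)
    (hconv : ∀ K : Set (EuclideanSpace ℝ (Fin n) × ℝ),
      K ⊆ upperHalfSpace n → IsCompact K →
      TendstoUniformlyOn (fun (j : ℕ) p => (WInt n (μ j) p.1 p.2).toReal)
        (fun p => (WInt n ν p.1 p.2).toReal) atTop K) :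
    ∀ φ : EuclideanSpace ℝ (Fin n) → ℂ, Continuous φ → HasCompactSupport φ →
      Tendsto (fun j => ∫ x, φ x ∂(μ j)) atTop (𝓝 (∫ x, φ x ∂ν)) := by
  intro φ hφ hcsφ
  -- integrability
  haveI hficν := isFiniteOnCompacts ν hν
  have hφν : Integrable φ ν := hφ.integrable_of_hasCompactSupport hcsφ
  have hφμ : ∀ j, Integrable φ (μ j) := fun j => by
    haveI := isFiniteOnCompacts (μ j) (hμ j)
    exact hφ.integrable_of_hasCompactSupport hcsφ
  -- real and imaginary parts
  set fr : EuclideanSpace ℝ (Fin n) → ℝ := fun x => (φ x).re with hfr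
  set fi : EuclideanSpace ℝ (Fin n) → ℝ := fun x => (φ x).im with hfi
  have hfrc : Continuous fr := Complex.continuous_re.comp hφ
  have hfic : Continuous fi := Complex.continuous_im.comp hφ
  have hfrcs : HasCompactSupport fr := hcsφ.comp_left rfl
  have hfics : HasCompactSupport fi := hcsφ.comp_left rfl
  have hre := main_real μ ν hμ hν hconv fr hfrc hfrcs
  have him := main_real μ ν hμ hν hconv fi hfic hfics
  -- combine
  have hpt : ∀ (lam : Measure (EuclideanSpace ℝ (Fin n))), Integrable φ lam →
      ∫ x, φ x ∂lam = ((∫ x, fr x ∂lam : ℝ) : ℂ) + ((∫ x, fi x ∂lam : ℝ) : ℂ) * Complex.I := by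
    intro lam hint
    have h1 : ∫ x, fr x ∂lam = (∫ x, φ x ∂lam).re := by
      simpa using integral_re hint
    have h2 : ∫ x, fi x ∂lam = (∫ x, φ x ∂lam).im := by
      simpa using integral_im hint
    rw [h1, h2, Complex.re_add_im]
  have htend : Tendsto (fun j => ((∫ x, fr x ∂(μ j) : ℝ) : ℂ)
      + ((∫ x, fi x ∂(μ j) : ℝ) : ℂ) * Complex.I) atTop
      (𝓝 (((∫ x, fr x ∂ν : ℝ) : ℂ) + ((∫ x, fi x ∂ν : ℝ) : ℂ) * Complex.I)) := by
    apply Tendsto.add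
    · exact (Complex.continuous_ofReal.tendsto _).comp hre
    · exact ((Complex.continuous_ofReal.tendsto _).comp him).mul_const Complex.I
  rw [hpt ν hφν]
  refine Tendsto.congr (fun j => ?_) htend
  rw [hpt (μ j) (hφμ j)]
end
end

section
/- For every dimension n and every α > 0 there exist positive constants c_n (depending only on n) and c_α (depending only on α and n) such that for every positive Borel measure μ on ℝⁿ with Wμ(0,t) finite for all t > 0 and every x₀ ∈ ℝⁿ: c_n · M_HL(μ)(x₀) ≤ sup_{t>0} Wμ(x₀,t²) ≤ sup_{(x,t)∈P(x₀,α)} Wμ(x,t) ≤ c_α · M_HL(μ)(x₀). -/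
open MeasureTheory Metric Filter Real Topology Set ENNReal

noncomputable section

/-- Hardy–Littlewood maximal function of a positive measure. -/
def MHL (n : ℕ) (μ : Measure (EuclideanSpace ℝ (Fin n)))
    (x₀ : EuclideanSpace ℝ (Fin n)) : ℝ≥0∞ :=
  ⨆ r ∈ Set.Ioi (0 : ℝ), μ (ball x₀ r) / volume (ball x₀ r)

/-! ### Auxiliary definitions and lemmas -/

/-- volume of the unit ball, as a real number -/
def vB (n : ℕ) : ℝ := (volume (ball (0 : EuclideanSpace ℝ (Fin n)) 1)).toReal

lemma vB_pos (n : ℕ) : 0 < vB n :=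
  ENNReal.toReal_pos (measure_ball_pos _ _ one_pos).ne' measure_ball_lt_top.ne

lemma ofReal_vB (n : ℕ) :
    ENNReal.ofReal (vB n) = volume (ball (0 : EuclideanSpace ℝ (Fin n)) 1) :=
  ENNReal.ofReal_toReal measure_ball_lt_top.ne

lemma volume_ball_eq (n : ℕ) (x : EuclideanSpace ℝ (Fin n)) {r : ℝ} (hr : 0 < r) :
    volume (ball x r) = ENNReal.ofReal (r ^ n) * ENNReal.ofReal (vB n) := by
  rw [ofReal_vB]
  cases n with
  | zero =>
      haveI : Subsingleton (EuclideanSpace ℝ (Fin 0)) :=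
        ⟨fun a b => PiLp.ext fun i => i.elim0⟩
      have hball : ∀ (z : EuclideanSpace ℝ (Fin 0)) {s : ℝ}, 0 < s → ball z s = Set.univ := by
        intro z s hs
        ext y
        simp [Metric.mem_ball, Subsingleton.elim y z, hs]
      rw [hball x hr, hball 0 one_pos]
      simp
  | succ m =>
      have h := MeasureTheory.Measure.addHaar_ball
        (volume : Measure (EuclideanSpace ℝ (Fin (m + 1)))) x hr.le
      rwa [finrank_euclideanSpace_fin] at h

lemma mhl_ball (n : ℕ) (μ : Measure (EuclideanSpace ℝ (Fin n)))
    (x₀ : EuclideanSpace ℝ (Fin n)) {s : ℝ} (hs : 0 < s) :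
    μ (ball x₀ s) ≤ MHL n μ x₀ * volume (ball x₀ s) := by
  have h0 : volume (ball x₀ s) ≠ 0 := (measure_ball_pos _ _ hs).ne'
  have ht : volume (ball x₀ s) ≠ ⊤ := measure_ball_lt_top.ne
  rw [← ENNReal.div_le_iff h0 ht]
  exact le_iSup₂_of_le s hs le_rfl

/-- the constant `c_n` -/
def cnConst (n : ℕ) : ℝ := vB n * ((4 * π) ^ (-(n : ℝ) / 2) * Real.exp (-4⁻¹))

lemma cnConst_pos (n : ℕ) : 0 < cnConst n := by
  have h4 : (0:ℝ) < 4 * π := by positivity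
  exact mul_pos (vB_pos n) (mul_pos (Real.rpow_pos_of_pos h4 _) (Real.exp_pos _))

lemma part1 (n : ℕ) (μ : Measure (EuclideanSpace ℝ (Fin n)))
    (x₀ : EuclideanSpace ℝ (Fin n)) {r : ℝ} (hr : 0 < r) :
    ENNReal.ofReal (cnConst n) * (μ (ball x₀ r) / volume (ball x₀ r)) ≤
      WInt n μ x₀ (r ^ 2) := by
  have hvpos : 0 < vB n := vB_pos n
  have hπ : (0:ℝ) < 4 * π := by positivity
  have hrn : (0:ℝ) < r ^ n * vB n := by positivity
  have hvol : volume (ball x₀ r) = ENNReal.ofReal (r ^ n * vB n) := by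
    rw [volume_ball_eq n x₀ hr, ← ENNReal.ofReal_mul (by positivity)]
  set K : ℝ := (4 * π * r ^ 2) ^ (-(n:ℝ) / 2) * Real.exp (-4⁻¹) with hK
  have hmeas : Measurable fun y : EuclideanSpace ℝ (Fin n) =>
      ENNReal.ofReal (heatKernel n (x₀ - y) (r ^ 2)) := by
    apply ENNReal.measurable_ofReal.comp
    apply Measurable.mul measurable_const
    apply Real.measurable_exp.comp
    apply Measurable.div _ measurable_const
    apply Measurable.neg
    exact ((continuous_const.sub continuous_id).norm.pow 2).measurable
  have hlow : ENNReal.ofReal K * μ (ball x₀ r) ≤ WInt n μ x₀ (r ^ 2) := by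
    rw [← setLIntegral_const (ball x₀ r) (ENNReal.ofReal K)]
    refine le_trans (setLIntegral_mono hmeas ?_) (setLIntegral_le_lintegral _ _)
    intro y hy
    apply ENNReal.ofReal_le_ofReal
    rw [hK]
    unfold heatKernel
    have h1 : ‖x₀ - y‖ < r := by
      rw [norm_sub_rev, ← dist_eq_norm]
      exact mem_ball.1 hy
    have h2 : ‖x₀ - y‖ ^ 2 ≤ r ^ 2 := by nlinarith [norm_nonneg (x₀ - y)]
    apply mul_le_mul_of_nonneg_left _ (by positivity)
    apply Real.exp_le_exp.2
    rw [neg_div]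
    apply neg_le_neg
    rw [div_le_iff₀ (by positivity)]
    nlinarith
  -- compute the constant comparison
  have hrp : (4 * π * r ^ 2) ^ (-(n:ℝ) / 2) = (4 * π) ^ (-(n:ℝ) / 2) * (r ^ n)⁻¹ := by
    rw [Real.mul_rpow hπ.le (by positivity)]
    congr 1
    rw [← Real.rpow_natCast r 2, ← Real.rpow_mul hr.le, ← Real.rpow_natCast r n,
      ← Real.rpow_neg hr.le]
    congr 1
    ring
  have hkey : cnConst n * (r ^ n * vB n)⁻¹ = K := by
    rw [hK, hrp, cnConst]
    field_simp
  calc ENNReal.ofReal (cnConst n) * (μ (ball x₀ r) / volume (ball x₀ r))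
      = ENNReal.ofReal (cnConst n) * (μ (ball x₀ r) * ENNReal.ofReal ((r ^ n * vB n)⁻¹)) := by
        rw [hvol, div_eq_mul_inv, ENNReal.ofReal_inv_of_pos hrn]
    _ = ENNReal.ofReal (cnConst n * (r ^ n * vB n)⁻¹) * μ (ball x₀ r) := by
        rw [ENNReal.ofReal_mul (cnConst_pos n).le]
        ring
    _ = ENNReal.ofReal K * μ (ball x₀ r) := by rw [hkey]
    _ ≤ WInt n μ x₀ (r ^ 2) := hlow

/-- the series entering the constant `c_α` -/
def Dsum (n : ℕ) (α : ℝ) : ℝ := ∑' k : ℕ, ((k : ℝ) + 2) ^ n * Real.exp (-((k : ℝ) ^ 2 * α) / 4)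

lemma summable_D (n : ℕ) {α : ℝ} (hα : 0 < α) :
    Summable (fun k : ℕ => ((k : ℝ) + 2) ^ n * Real.exp (-((k : ℝ) ^ 2 * α) / 4)) := by
  set ρ := Real.exp (-(α / 4)) with hρdef
  have hρpos : 0 < ρ := Real.exp_pos _
  have hρlt : ρ < 1 := Real.exp_lt_one_iff.2 (by linarith)
  have h1 : Summable (fun k : ℕ => ((k : ℝ)) ^ n * ρ ^ k) :=
    summable_pow_mul_geometric_of_norm_lt_one n
      (by rwa [Real.norm_eq_abs, abs_of_pos hρpos])
  have h2 : Summable (fun k : ℕ => ((k : ℝ) + 2) ^ n * ρ ^ k) := by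
    have h3 := (summable_nat_add_iff 2).2 h1
    have h4 := h3.mul_right ((ρ ^ 2)⁻¹)
    refine h4.congr fun k => ?_
    push_cast
    rw [pow_add]
    field_simp
  refine h2.of_nonneg_of_le (fun k => by positivity) (fun k => ?_)
  have hk2 : (k : ℝ) ≤ (k : ℝ) ^ 2 := by
    exact_mod_cast Nat.le_self_pow two_ne_zero k
  have hρk : ρ ^ k = Real.exp ((k : ℝ) * (-(α / 4))) := (Real.exp_nat_mul _ k).symm
  rw [hρk]
  apply mul_le_mul_of_nonneg_left _ (by positivity)
  apply Real.exp_le_exp.2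
  nlinarith

lemma Dsum_pos (n : ℕ) {α : ℝ} (hα : 0 < α) : 0 < Dsum n α := by
  have hs := summable_D n hα
  have h0 : (0:ℝ) < (((0:ℕ) : ℝ) + 2) ^ n * Real.exp (-(((0:ℕ) : ℝ) ^ 2 * α) / 4) := by
    positivity
  exact lt_of_lt_of_le h0 (Summable.le_tsum hs 0 fun j _ => by positivity)

/-- the constant `c_α` -/
def caConst (n : ℕ) (α : ℝ) : ℝ :=
  vB n * ((4 * π) ^ (-(n : ℝ) / 2) * α ^ ((n : ℝ) / 2)) * Dsum n α

lemma caConst_pos (n : ℕ) {α : ℝ} (hα : 0 < α) : 0 < caConst n α := by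
  have h1 := vB_pos n
  have h2 := Dsum_pos n hα
  have hπ : (0:ℝ) < 4 * π := by positivity
  unfold caConst
  positivity

lemma part3 (n : ℕ) {α : ℝ} (hα : 0 < α) (μ : Measure (EuclideanSpace ℝ (Fin n)))
    (x₀ : EuclideanSpace ℝ (Fin n)) {x : EuclideanSpace ℝ (Fin n)} {t : ℝ}
    (ht : 0 < t) (hx : ‖x - x₀‖ ^ 2 < α * t) :
    WInt n μ x t ≤ ENNReal.ofReal (caConst n α) * MHL n μ x₀ := by
  have hπ : (0:ℝ) < 4 * π := by positivity
  set R := Real.sqrt (α * t) with hRdef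
  have hRpos : 0 < R := Real.sqrt_pos.2 (by positivity)
  have hR2 : R ^ 2 = α * t := Real.sq_sqrt (by positivity)
  have hxR : ‖x - x₀‖ < R := (Real.lt_sqrt (norm_nonneg _)).2 hx
  set A : ℕ → Set (EuclideanSpace ℝ (Fin n)) :=
    fun k => {y | (k : ℝ) * R ≤ ‖y - x‖ ∧ ‖y - x‖ < ((k : ℝ) + 1) * R} with hA
  have hAmeas : ∀ k, MeasurableSet (A k) := by
    intro k
    have hmn : Measurable fun y : EuclideanSpace ℝ (Fin n) => ‖y - x‖ :=
      (continuous_id.sub continuous_const).norm.measurable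
    exact hmn measurableSet_Ico
  set C : ℕ → ℝ≥0∞ := fun k =>
    ENNReal.ofReal ((4 * π * t) ^ (-(n:ℝ) / 2) * Real.exp (-((k : ℝ) ^ 2 * α) / 4)) with hC
  have hpt : ∀ y, ENNReal.ofReal (heatKernel n (x - y) t) ≤
      ∑' k, (A k).indicator (fun _ => C k) y := by
    intro y
    set m := ⌊‖y - x‖ / R⌋₊ with hm
    have hy1 : (m : ℝ) * R ≤ ‖y - x‖ := by
      have h := Nat.floor_le (div_nonneg (norm_nonneg (y - x)) hRpos.le)
      calc (m : ℝ) * R ≤ (‖y - x‖ / R) * R := by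
            exact mul_le_mul_of_nonneg_right h hRpos.le
        _ = ‖y - x‖ := div_mul_cancel₀ _ hRpos.ne'
    have hy2 : ‖y - x‖ < ((m : ℝ) + 1) * R := by
      have h := Nat.lt_floor_add_one (‖y - x‖ / R)
      calc ‖y - x‖ = (‖y - x‖ / R) * R := (div_mul_cancel₀ _ hRpos.ne').symm
        _ < ((m : ℝ) + 1) * R := by exact mul_lt_mul_of_pos_right h hRpos
    have hmem : y ∈ A m := ⟨hy1, hy2⟩
    have hle : ENNReal.ofReal (heatKernel n (x - y) t) ≤ C m := by
      apply ENNReal.ofReal_le_ofReal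
      unfold heatKernel
      apply mul_le_mul_of_nonneg_left _ (by positivity)
      apply Real.exp_le_exp.2
      have h5 : (m : ℝ) ^ 2 * (α * t) ≤ ‖x - y‖ ^ 2 := by
        rw [← hR2, norm_sub_rev]
        nlinarith [hy1, norm_nonneg (y - x), mul_nonneg (Nat.cast_nonneg m) hRpos.le]
      rw [div_le_div_iff₀ (by positivity) (by norm_num)]
      nlinarith
    calc ENNReal.ofReal (heatKernel n (x - y) t) ≤ C m := hle
      _ = (A m).indicator (fun _ => C m) y := (Set.indicator_of_mem hmem (fun _ => C m)).symm
      _ ≤ ∑' k, (A k).indicator (fun _ => C k) y := ENNReal.le_tsum m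
  have hsub : ∀ k : ℕ, A k ⊆ ball x₀ (((k : ℝ) + 2) * R) := by
    intro k y hy
    rcases hy with ⟨_, h2⟩
    rw [mem_ball, dist_eq_norm]
    calc ‖y - x₀‖ ≤ ‖y - x‖ + ‖x - x₀‖ := by
          have := norm_sub_le_norm_sub_add_norm_sub y x x₀
          linarith [this]
      _ < ((k : ℝ) + 2) * R := by nlinarith
  set K0 : ℝ := vB n * ((4 * π) ^ (-(n : ℝ) / 2) * α ^ ((n : ℝ) / 2)) with hK0
  have hK0pos : 0 < K0 :=
    mul_pos (vB_pos n) (mul_pos (Real.rpow_pos_of_pos hπ _) (Real.rpow_pos_of_pos hα _))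
  have hterm : ∀ k : ℕ, C k * volume (ball x₀ (((k : ℝ) + 2) * R)) =
      ENNReal.ofReal (K0 * (((k : ℝ) + 2) ^ n * Real.exp (-((k : ℝ) ^ 2 * α) / 4))) := by
    intro k
    have hk2R : (0:ℝ) < ((k : ℝ) + 2) * R := by positivity
    rw [volume_ball_eq n x₀ hk2R, hC]
    rw [← ENNReal.ofReal_mul (by positivity), ← ENNReal.ofReal_mul (by positivity)]
    congr 1
    have h1 : (4 * π * t) ^ (-(n:ℝ) / 2) = (4 * π) ^ (-(n:ℝ) / 2) * t ^ (-(n:ℝ) / 2) :=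
      Real.mul_rpow hπ.le ht.le
    have h2 : R ^ n = α ^ ((n:ℝ) / 2) * t ^ ((n:ℝ) / 2) := by
      rw [hRdef, Real.sqrt_eq_rpow, ← Real.rpow_natCast ((α * t) ^ ((1:ℝ) / 2)) n,
        ← Real.rpow_mul (by positivity), (show (1:ℝ) / 2 * (n:ℝ) = (n:ℝ) / 2 by ring),
        Real.mul_rpow hα.le ht.le]
    have h3 : t ^ (-(n:ℝ) / 2) * t ^ ((n:ℝ) / 2) = 1 := by
      rw [← Real.rpow_add ht, show -(n:ℝ) / 2 + (n:ℝ) / 2 = 0 by ring, Real.rpow_zero]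
    rw [h1, mul_pow, h2, hK0]
    linear_combination ((4 * π) ^ (-(n:ℝ) / 2) * Real.exp (-((k : ℝ) ^ 2 * α) / 4) *
      (((k : ℝ) + 2) ^ n * α ^ ((n:ℝ) / 2) * vB n)) * h3
  calc WInt n μ x t ≤ ∫⁻ y, ∑' k, (A k).indicator (fun _ => C k) y ∂μ := lintegral_mono hpt
    _ = ∑' k, ∫⁻ y, (A k).indicator (fun _ => C k) y ∂μ :=
        lintegral_tsum fun k => (measurable_const.indicator (hAmeas k)).aemeasurable
    _ = ∑' k, C k * μ (A k) := tsum_congr fun k => lintegral_indicator_const (hAmeas k) _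
    _ ≤ ∑' k, C k * (MHL n μ x₀ * volume (ball x₀ (((k : ℝ) + 2) * R))) := by
        refine ENNReal.tsum_le_tsum fun k => ?_
        refine mul_le_mul_right ?_ _
        refine le_trans (measure_mono (hsub k)) (mhl_ball n μ x₀ (by positivity))
    _ = MHL n μ x₀ * ∑' k, C k * volume (ball x₀ (((k : ℝ) + 2) * R)) := by
        rw [← ENNReal.tsum_mul_left]
        exact tsum_congr fun k => by ring
    _ = MHL n μ x₀ * ∑' k : ℕ, ENNReal.ofReal
          (K0 * (((k : ℝ) + 2) ^ n * Real.exp (-((k : ℝ) ^ 2 * α) / 4))) := by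
        rw [tsum_congr hterm]
    _ = MHL n μ x₀ * ENNReal.ofReal (caConst n α) := by
        congr 1
        rw [← ENNReal.ofReal_tsum_of_nonneg (fun k => mul_nonneg hK0pos.le (by positivity))
          (((summable_D n hα).mul_left K0))]
        congr 1
        rw [tsum_mul_left]
        rfl
    _ = ENNReal.ofReal (caConst n α) * MHL n μ x₀ := mul_comm _ _

/-- Comparison between the Hardy–Littlewood maximal function and the heat maximal
functions: the constant `c_n` depends only on `n`, and `c_α` only on `α` and `n`. -/
theorem maximal_function_comparison (n : ℕ) :
    ∃ cn : ℝ, 0 < cn ∧ ∀ α : ℝ, 0 < α → ∃ cα : ℝ, 0 < cα ∧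
      ∀ μ : Measure (EuclideanSpace ℝ (Fin n)),
        (∀ t : ℝ, 0 < t → WInt n μ 0 t < ⊤) →
        ∀ x₀ : EuclideanSpace ℝ (Fin n),
          ENNReal.ofReal cn * MHL n μ x₀ ≤ (⨆ t ∈ Set.Ioi (0 : ℝ), WInt n μ x₀ (t ^ 2)) ∧
          (⨆ t ∈ Set.Ioi (0 : ℝ), WInt n μ x₀ (t ^ 2)) ≤
            (⨆ p ∈ parabolicRegion n x₀ α, WInt n μ p.1 p.2) ∧
          (⨆ p ∈ parabolicRegion n x₀ α, WInt n μ p.1 p.2) ≤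
            ENNReal.ofReal cα * MHL n μ x₀ := by
  refine ⟨cnConst n, cnConst_pos n, fun α hα =>
    ⟨caConst n α, caConst_pos n hα, fun μ _ x₀ => ⟨?_, ?_, ?_⟩⟩⟩
  · have heq : ENNReal.ofReal (cnConst n) * MHL n μ x₀ =
        ⨆ r ∈ Set.Ioi (0:ℝ),
          ENNReal.ofReal (cnConst n) * (μ (ball x₀ r) / volume (ball x₀ r)) := by
      unfold MHL
      simp_rw [ENNReal.mul_iSup]
    rw [heq]
    exact iSup₂_le fun r hr => le_iSup₂_of_le r hr (part1 n μ x₀ (mem_Ioi.1 hr))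
  · refine iSup₂_le fun t ht => ?_
    have ht' : (0:ℝ) < t := mem_Ioi.1 ht
    refine le_iSup₂_of_le (x₀, t ^ 2) ⟨?_, ?_⟩ le_rfl
    · show (0:ℝ) < t ^ 2
      positivity
    · show ‖x₀ - x₀‖ ^ 2 < α * t ^ 2
      have h : (0:ℝ) < α * t ^ 2 := by positivity
      simpa [sub_self] using h
  · exact iSup₂_le fun p hp => part3 n hα μ x₀ hp.1 hp.2
end
end

section
/- Let β : ℝ → ℝ be a nondecreasing, left-continuous function and let μ_β be the associated Lebesgue-Stieltjes measure on ℝ, determined by μ_β([a,b)) = β(b) − β(a) for a ≤ b. Then for x₀ ∈ ℝ and A ∈ ℝ, β is differentiable at x₀ with β'(x₀) = A if and only if the strong derivative of μ_β at x₀ exists and equals A. -/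
/-!
For `r > 0` and `a < a' < b`, the measure of the open interval `x₀ + r • (a, b)` is squeezed
between increments of `β`:
`β (x₀ + r b) - β (x₀ + r a') ≤ μ_β (x₀ + r • (a, b)) ≤ β (x₀ + r b) - β (x₀ + r a)`.
Both sides of the equivalence say that a family indexed by the left endpoint `a` has, after
division by `r`, the limit `A (b - a)` as `r → 0+`: for the increments of `β` this is
differentiability at `x₀` (the choices `(a, b) = (0, 1)` and `(-1, 0)` give the one-sided
derivatives), for the measures it is the strong derivative. As the limit depends continuously
on `a`, the squeeze transfers the convergence in either direction.
-/

open MeasureTheory Filter Topology Set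

noncomputable section

/-- A measure on ℝ has strong derivative `A` at `x₀` if for every open interval
`I = (a,b)`, `μ(x₀ + rI)/m(rI) → A` as `r → 0+`. -/
def HasStrongDerivR (μ : Measure ℝ) (A x₀ : ℝ) : Prop :=
  ∀ a b : ℝ, a < b →
    Tendsto (fun r : ℝ =>
        (μ ((fun y => x₀ + r * y) '' (Set.Ioo a b))).toReal /
          (volume ((fun y => r * y) '' (Set.Ioo a b))).toReal)
      (𝓝[>] 0) (𝓝 A)

theorem hasDerivAt_iff_forall_tendsto_sub_div {f : ℝ → ℝ} {f' x : ℝ} :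
    HasDerivAt f f' x ↔ ∀ a b : ℝ, a < b →
      Tendsto (fun r => (f (x + r * b) - f (x + r * a)) / r) (𝓝[>] 0) (𝓝 (f' * (b - a))) := by
  constructor
  · intro hf a b _
    have hscaled : ∀ t, Tendsto (fun r => (f (x + r * t) - f x) / r) (𝓝[>] 0) (𝓝 (f' * t)) := by
      intro t
      have hcomp : HasDerivAt (fun r => f (x + r * t)) (f' * t) 0 :=
        (by simpa using hf : HasDerivAt f f' (x + 0 * t)).comp 0
          ((hasDerivAt_mul_const t).const_add x)
      simpa [div_eq_inv_mul] using
        (hasDerivAt_iff_tendsto_slope_zero.1 hcomp).mono_left (nhdsGT_le_nhdsNE 0)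
    simpa [sub_div, mul_sub] using (hscaled b).sub (hscaled a)
  · intro h
    have hright : Tendsto (fun r => (f (x + r) - f x) / r) (𝓝[>] 0) (𝓝 f') := by
      simpa using h 0 1 one_pos
    have hleft : Tendsto (fun r => (f x - f (x + -r)) / r) (𝓝[>] 0) (𝓝 f') := by
      simpa using h (-1) 0 neg_one_lt_zero
    rw [hasDerivAt_iff_tendsto_slope_zero, ← nhdsLT_sup_nhdsGT, tendsto_sup]
    refine ⟨?_, by simpa [div_eq_inv_mul] using hright⟩
    refine (hleft.comp (by simpa using tendsto_neg_nhdsLT (a := (0 : ℝ)))).congr fun t => ?_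
    simp only [Function.comp_apply, neg_neg, smul_eq_mul, div_neg]
    ring

section StieltjesMeasure

variable {β : ℝ → ℝ} {μ : Measure ℝ}

theorem measure_Ioo_toReal_le (hβ : Monotone β)
    (hμ : ∀ a b : ℝ, a ≤ b → μ (Ico a b) = ENNReal.ofReal (β b - β a)) {c d : ℝ} (hcd : c ≤ d) :
    (μ (Ioo c d)).toReal ≤ β d - β c := by
  rw [← ENNReal.toReal_ofReal (sub_nonneg.2 (hβ hcd)), ← hμ c d hcd]
  exact ENNReal.toReal_mono (by simp [hμ c d hcd]) (measure_mono Ioo_subset_Ico_self)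

theorem sub_le_measure_Ioo_toReal
    (hμ : ∀ a b : ℝ, a ≤ b → μ (Ico a b) = ENNReal.ofReal (β b - β a)) {c c' d : ℝ}
    (hcc' : c < c') (hc'd : c' ≤ d) :
    β d - β c' ≤ (μ (Ioo c d)).toReal := by
  have hfin : μ (Ioo c d) ≠ ⊤ :=
    ne_top_of_le_ne_top (by simp [hμ c d (hcc'.le.trans hc'd)])
      (measure_mono Ioo_subset_Ico_self)
  calc β d - β c' ≤ (μ (Ico c' d)).toReal := by
        rw [hμ c' d hc'd, ENNReal.toReal_ofReal']; exact le_max_left _ _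
    _ ≤ (μ (Ioo c d)).toReal := ENNReal.toReal_mono hfin (measure_mono (Ico_subset_Ioo_left hcc'))

end StieltjesMeasure

theorem forall_tendsto_iff_of_interlaced {α : Type*} {l : Filter α} {S M : ℝ → α → ℝ}
    {φ : ℝ → ℝ} {b : ℝ} (hφ : Continuous φ) (hMS : ∀ a < b, ∀ᶠ x in l, M a x ≤ S a x)
    (hSM : ∀ a a', a < a' → a' < b → ∀ᶠ x in l, S a' x ≤ M a x) :
    (∀ a < b, Tendsto (S a) l (𝓝 (φ a))) ↔ (∀ a < b, Tendsto (M a) l (𝓝 (φ a))) := by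
  constructor
  · intro hS a hab
    refine tendsto_order.2 ⟨fun c hc => ?_, fun c hc => ?_⟩
    · obtain ⟨a', hca', haa', ha'b⟩ :=
        (((hφ.tendsto a).eventually_const_lt hc).filter_mono nhdsWithin_le_nhds |>.and
          (Ioo_mem_nhdsGT hab)).exists
      filter_upwards [(hS a' ha'b).eventually_const_lt hca', hSM a a' haa' ha'b] with x h1 h2
      exact h1.trans_le h2
    · filter_upwards [(hS a hab).eventually_lt_const hc, hMS a hab] with x h1 h2
      exact h2.trans_lt h1
  · intro hM a hab
    refine tendsto_order.2 ⟨fun c hc => ?_, fun c hc => ?_⟩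
    · filter_upwards [(hM a hab).eventually_const_lt hc, hMS a hab] with x h1 h2
      exact h1.trans_le h2
    · obtain ⟨a', hca', ha'a⟩ :=
        (((hφ.tendsto a).eventually_lt_const hc).filter_mono nhdsWithin_le_nhds |>.and
          (self_mem_nhdsWithin : Iio a ∈ 𝓝[<] a)).exists
      filter_upwards [(hM a' (ha'a.trans hab)).eventually_lt_const hca',
        hSM a' a ha'a hab] with x h1 h2
      exact h2.trans_lt h1

theorem forall_tendsto_sub_div_iff_forall_tendsto_measure_Ioo_div {β : ℝ → ℝ} {μ : Measure ℝ}
    (hβ : Monotone β) (hμ : ∀ a b : ℝ, a ≤ b → μ (Ico a b) = ENNReal.ofReal (β b - β a))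
    (x₀ A : ℝ) :
    (∀ a b : ℝ, a < b → Tendsto (fun r => (β (x₀ + r * b) - β (x₀ + r * a)) / r)
        (𝓝[>] 0) (𝓝 (A * (b - a)))) ↔
      ∀ a b : ℝ, a < b → Tendsto (fun r => (μ (Ioo (x₀ + r * a) (x₀ + r * b))).toReal / r)
        (𝓝[>] 0) (𝓝 (A * (b - a))) := by
  rw [forall_comm]
  conv_rhs => rw [forall_comm]
  refine forall_congr' fun b => forall_tendsto_iff_of_interlaced (by fun_prop) ?_ ?_
  · intro a hab
    filter_upwards [self_mem_nhdsWithin] with r (hr : 0 < r)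
    gcongr
    exact measure_Ioo_toReal_le hβ hμ (by gcongr)
  · intro a a' haa' ha'b
    filter_upwards [self_mem_nhdsWithin] with r (hr : 0 < r)
    gcongr
    exact sub_le_measure_Ioo_toReal hμ (by gcongr) (by gcongr)

theorem hasStrongDerivR_iff (μ : Measure ℝ) (A x₀ : ℝ) :
    HasStrongDerivR μ A x₀ ↔ ∀ a b : ℝ, a < b →
      Tendsto (fun r => (μ (Ioo (x₀ + r * a) (x₀ + r * b))).toReal / r)
        (𝓝[>] 0) (𝓝 (A * (b - a))) := by
  refine forall₃_congr fun a b hab => ?_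
  have hba : b - a ≠ 0 := sub_ne_zero.2 hab.ne'
  suffices hratio : ∀ᶠ r in 𝓝[>] 0,
      (μ ((fun y => x₀ + r * y) '' Ioo a b)).toReal / (volume ((fun y => r * y) '' Ioo a b)).toReal
        = (μ (Ioo (x₀ + r * a) (x₀ + r * b))).toReal / r / (b - a) by
    rw [tendsto_congr' hratio]
    exact ⟨fun h => by simpa [hba] using h.mul_const (b - a),
      fun h => by simpa [hba] using h.div_const (b - a)⟩
  filter_upwards [self_mem_nhdsWithin] with r (hr : 0 < r)
  have himage : (fun y => x₀ + r * y) '' Ioo a b = Ioo (x₀ + r * a) (x₀ + r * b) := by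
    rw [← image_image (fun y => x₀ + y) (fun y => r * y), image_mul_left_Ioo hr,
      image_const_add_Ioo]
  rw [himage, image_mul_left_Ioo hr, Real.volume_Ioo, ← mul_sub,
    ENNReal.toReal_ofReal (by nlinarith), div_div]

theorem stieltjes_deriv_iff_strong_deriv_general
    (β : ℝ → ℝ) (hmono : Monotone β)
    (μβ : Measure ℝ)
    (hμβ : ∀ a b : ℝ, a ≤ b → μβ (Set.Ico a b) = ENNReal.ofReal (β b - β a))
    (x₀ A : ℝ) :
    HasDerivAt β A x₀ ↔ HasStrongDerivR μβ A x₀ := by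
  rw [hasDerivAt_iff_forall_tendsto_sub_div, hasStrongDerivR_iff]
  exact forall_tendsto_sub_div_iff_forall_tendsto_measure_Ioo_div hmono hμβ x₀ A

/-- For a nondecreasing left-continuous `β` with Lebesgue–Stieltjes measure `μ_β`
(determined by `μ_β([a,b)) = β(b) − β(a)`), differentiability `β'(x₀) = A` is
equivalent to the strong derivative of `μ_β` at `x₀` existing and equalling `A`. -/
theorem stieltjes_deriv_iff_strong_deriv
    (β : ℝ → ℝ) (hmono : Monotone β)
    (hlc : ∀ x : ℝ, ContinuousWithinAt β (Set.Iio x) x)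
    (μβ : Measure ℝ)
    (hμβ : ∀ a b : ℝ, a ≤ b → μβ (Set.Ico a b) = ENNReal.ofReal (β b - β a))
    (x₀ A : ℝ) :
    HasDerivAt β A x₀ ↔ HasStrongDerivR μβ A x₀ :=
  stieltjes_deriv_iff_strong_deriv_general β hmono μβ hμβ x₀ A
end
end
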